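/- arXiv:1611.04484 — 11 statements merged into one kernel-verified Lean document; each statement's English description precedes it below -/
import Mathlib

section
/- For any compact metric spaces X and Y there exists an optimal correspondence, i.e., a correspondence R between X and Y with dis R = 2·d_GH(X,Y). -/
/-!
Put isometric copies of `X` and `Y` in a common space at Hausdorff distance `r = d_GH(X, Y)`
(the optimal coupling) and relate `x` to `y` when their copies are at distance at most `r`.
By compactness every point has a partner, and the triangle inequality gives `dis R ≤ 2r`.
Conversely, gluing `X` and `Y` along any correspondence `R` with the metric in which related
points are at distance `dis R / 2 + δ` shows `d_GH(X, Y) ≤ dis R / 2`.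
-/

/-- The distortion of a relation `R ⊆ X × Y`. -/
noncomputable def relDistortion {X Y : Type*} [MetricSpace X] [MetricSpace Y]
    (R : Set (X × Y)) : ℝ :=
  sSup {v : ℝ | ∃ p ∈ R, ∃ q ∈ R, v = |dist p.1 q.1 - dist p.2 q.2|}

/-- A correspondence between `X` and `Y`: a relation whose projections onto both
factors are surjective. -/
def IsCorrespondence {X Y : Type*} (R : Set (X × Y)) : Prop :=
  (∀ x : X, ∃ y : Y, (x, y) ∈ R) ∧ (∀ y : Y, ∃ x : X, (x, y) ∈ R)

open GromovHausdorff Metric Set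

section Distortion

variable {X Y : Type*} [MetricSpace X] [MetricSpace Y] {R : Set (X × Y)}

theorem relDistortion_nonneg : 0 ≤ relDistortion R :=
  Real.sSup_nonneg (by rintro _ ⟨p, -, q, -, rfl⟩; positivity)

theorem relDistortion_le {c : ℝ} (hc : 0 ≤ c)
    (h : ∀ p ∈ R, ∀ q ∈ R, |dist p.1 q.1 - dist p.2 q.2| ≤ c) : relDistortion R ≤ c :=
  Real.sSup_le (by rintro _ ⟨p, hp, q, hq, rfl⟩; exact h p hp q hq) hc

theorem abs_dist_sub_dist_le_relDistortion [BoundedSpace X] [BoundedSpace Y]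
    {p q : X × Y} (hp : p ∈ R) (hq : q ∈ R) :
    |dist p.1 q.1 - dist p.2 q.2| ≤ relDistortion R := by
  refine le_csSup ⟨diam (univ : Set X) + diam (univ : Set Y), ?_⟩ ⟨p, hp, q, hq, rfl⟩
  rintro _ ⟨p, -, q, -, rfl⟩
  have hX := dist_le_diam_of_mem BoundedSpace.bounded_univ (mem_univ p.1) (mem_univ q.1)
  have hY := dist_le_diam_of_mem BoundedSpace.bounded_univ (mem_univ p.2) (mem_univ q.2)
  rw [abs_le]
  constructor <;> linarith [dist_nonneg (x := p.1) (y := q.1), dist_nonneg (x := p.2) (y := q.2)]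

end Distortion

section Coupling

variable {X Y Z : Type*} [MetricSpace Z]

theorem exists_dist_le_of_hausdorffDist_le [TopologicalSpace Y] [CompactSpace Y] [Nonempty Y]
    {f : X → Z} {g : Y → Z} (hf : Bornology.IsBounded (range f)) (hg : Continuous g) {r : ℝ}
    (h : hausdorffDist (range f) (range g) ≤ r) (x : X) : ∃ y, dist (f x) (g y) ≤ r := by
  have hcg : IsCompact (range g) := isCompact_range hg
  obtain ⟨_, ⟨y, rfl⟩, hy⟩ := hcg.exists_infDist_eq_dist (range_nonempty g) (f x)
  refine ⟨y, hy ▸ (infDist_le_hausdorffDist_of_mem (mem_range_self x) ?_).trans h⟩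
  exact hausdorffEDist_ne_top_of_nonempty_of_bounded ⟨_, mem_range_self x⟩ (range_nonempty g)
    hf hcg.isBounded

theorem isCorrespondence_of_hausdorffDist_le [TopologicalSpace X] [CompactSpace X] [Nonempty X]
    [TopologicalSpace Y] [CompactSpace Y] [Nonempty Y] {f : X → Z} {g : Y → Z}
    (hf : Continuous f) (hg : Continuous g) {r : ℝ}
    (h : hausdorffDist (range f) (range g) ≤ r) :
    IsCorrespondence {p : X × Y | dist (f p.1) (g p.2) ≤ r} := by
  refine ⟨exists_dist_le_of_hausdorffDist_le (isCompact_range hf).isBounded hg h, fun y => ?_⟩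
  rw [hausdorffDist_comm] at h
  obtain ⟨x, hx⟩ := exists_dist_le_of_hausdorffDist_le (isCompact_range hg).isBounded hf h y
  exact ⟨x, (dist_comm _ _).trans_le hx⟩

theorem relDistortion_le_of_isometry [MetricSpace X] [MetricSpace Y] {f : X → Z} {g : Y → Z}
    (hf : Isometry f) (hg : Isometry g) {r : ℝ} (hr : 0 ≤ r) :
    relDistortion {p : X × Y | dist (f p.1) (g p.2) ≤ r} ≤ 2 * r := by
  refine relDistortion_le (by positivity) fun p hp q hq => ?_
  have hpq := dist_dist_dist_le (f p.1) (f q.1) (g p.2) (g q.2)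
  rw [hf.dist_eq, hg.dist_eq, Real.dist_eq] at hpq
  simp only [mem_ofPred_eq] at hp hq
  linarith

end Coupling

section Gluing

variable {X Y : Type*} [MetricSpace X] [CompactSpace X] [Nonempty X]
  [MetricSpace Y] [CompactSpace Y] [Nonempty Y] {R : Set (X × Y)}

theorem ghDist_le_of_isCorrespondence (hR : IsCorrespondence R) {ε : ℝ}
    (hε : 0 < ε) (h : ∀ p ∈ R, ∀ q ∈ R, |dist p.1 q.1 - dist p.2 q.2| ≤ 2 * ε) :
    ghDist X Y ≤ ε := by
  have : Nonempty R := by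
    obtain ⟨y, hy⟩ := hR.1 (Classical.arbitrary X)
    exact ⟨⟨_, hy⟩⟩
  let Φ : R → X := fun p => p.1.1
  let Ψ : R → Y := fun p => p.1.2
  let _ : MetricSpace (X ⊕ Y) := glueMetricApprox Φ Ψ ε hε fun p q => h _ p.2 _ q.2
  have hl : Isometry (Sum.inl : X → X ⊕ Y) := Isometry.of_dist_eq fun _ _ => rfl
  have hr : Isometry (Sum.inr : Y → X ⊕ Y) := Isometry.of_dist_eq fun _ _ => rfl
  refine (ghDist_le_hausdorffDist hl hr).trans (hausdorffDist_le_of_mem_dist hε.le ?_ ?_)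
  · rintro _ ⟨x, rfl⟩
    obtain ⟨y, hy⟩ := hR.1 x
    exact ⟨.inr y, mem_range_self y, (glueDist_glued_points Φ Ψ ε ⟨(x, y), hy⟩).le⟩
  · rintro _ ⟨y, rfl⟩
    obtain ⟨x, hx⟩ := hR.2 y
    refine ⟨.inl x, mem_range_self x, ?_⟩
    rw [dist_comm]
    exact (glueDist_glued_points Φ Ψ ε ⟨(x, y), hx⟩).le

theorem ghDist_le_half_relDistortion (hR : IsCorrespondence R) :
    ghDist X Y ≤ relDistortion R / 2 :=
  le_of_forall_pos_le_add fun δ hδ =>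
    ghDist_le_of_isCorrespondence hR (by linarith [relDistortion_nonneg (R := R)])
      fun _ hp _ hq => by linarith [abs_dist_sub_dist_le_relDistortion hp hq]

end Gluing

/-- for compact metric spaces there exists an optimal correspondence,
i.e. a correspondence whose distortion equals 2·d_GH(X,Y). -/
theorem stmt_2 (X Y : Type) [MetricSpace X] [CompactSpace X] [Nonempty X]
    [MetricSpace Y] [CompactSpace Y] [Nonempty Y] :
    ∃ R : Set (X × Y), IsCorrespondence R ∧
      relDistortion R = 2 * GromovHausdorff.ghDist X Y := by
  have hl := isometry_optimalGHInjl X Y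
  have hr := isometry_optimalGHInjr X Y
  let R := {p : X × Y | dist (optimalGHInjl X Y p.1) (optimalGHInjr X Y p.2) ≤ ghDist X Y}
  have hopt : hausdorffDist (range (optimalGHInjl X Y)) (range (optimalGHInjr X Y)) =
      ghDist X Y := hausdorffDist_optimal
  have hR : IsCorrespondence R :=
    isCorrespondence_of_hausdorffDist_le hl.continuous hr.continuous hopt.le
  have hnonneg : 0 ≤ ghDist X Y := hopt ▸ hausdorffDist_nonneg
  refine ⟨R, hR, le_antisymm (relDistortion_le_of_isometry hl hr hnonneg) ?_⟩
  linarith [ghDist_le_half_relDistortion hR]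
end

section
/- Let M = {1,…,n} be a finite metric space with minimal nonzero distance s(M), let 0 < ε ≤ s(M)/2, and let X be a compact metric space with 2·d_GH(M,X) < ε. Then there exists a partition X = X₁ ⊔ … ⊔ Xₙ such that diam Xᵢ < ε for all i, and for all i, j and all x ∈ Xᵢ, x' ∈ Xⱼ one has |d(x,x') − d(i,j)| < ε. -/
/-- A canonical partition of `X` with respect to the finite metric space `M` and
parameter `ε`: a partition of `X` into nonempty parts indexed by the points of `M`,
each of diameter `< ε`, realizing the distances of `M` within `ε`. -/
def IsCanonPartition {M X : Type*} [MetricSpace M] [MetricSpace X]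
    (ε : ℝ) (P : M → Set X) : Prop :=
  (∀ i, (P i).Nonempty) ∧ (Pairwise fun i j : M => Disjoint (P i) (P j)) ∧
    (⋃ i, P i) = Set.univ ∧ (∀ i, Metric.diam (P i) < ε) ∧
    (∀ i j : M, ∀ x ∈ P i, ∀ x' ∈ P j, |dist x x' - dist i j| < ε)

/-- if `M = {1,…,n}` is a finite metric space, `0 < ε ≤ s(M)/2`
(expressed pointwise: `2ε ≤ dist i j` for all `i ≠ j`), and `X` is a compact metric
space with `2·d_GH(M,X) < ε`, then `X` admits a partition `X = X₁ ⊔ … ⊔ Xₙ` with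
`diam Xᵢ < ε` and `|d(x,x') − d(i,j)| < ε` for all `x ∈ Xᵢ`, `x' ∈ Xⱼ`. -/
theorem stmt_4 (M X : Type) [MetricSpace M] [Fintype M] [Nonempty M]
    [MetricSpace X] [CompactSpace X] [Nonempty X]
    (ε : ℝ) (hε : 0 < ε) (hεs : ∀ i j : M, i ≠ j → 2 * ε ≤ dist i j)
    (hX : 2 * GromovHausdorff.ghDist M X < ε) :
    ∃ P : M → Set X, IsCanonPartition ε P := by
  obtain ⟨Φ, Ψ, hΦ, hΨ, hgh⟩ := GromovHausdorff.ghDist_eq_hausdorffDist M X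
  set D := Metric.hausdorffDist (Set.range Φ) (Set.range Ψ) with hD
  have hDlt : D < ε / 2 := by rw [← hgh]; linarith
  have hD0 : 0 ≤ D := Metric.hausdorffDist_nonneg
  set ε' : ℝ := (D + ε / 2) / 2 with hε'
  have hDε' : D < ε' := by simp only [hε']; linarith
  have hε'lt : 2 * ε' < ε := by simp only [hε']; linarith
  have hε'0 : 0 < ε' := by linarith
  have hne : EMetric.hausdorffEdist (Set.range Φ) (Set.range Ψ) ≠ ⊤ :=
    Metric.hausdorffEdist_ne_top_of_nonempty_of_bounded (Set.range_nonempty Φ)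
      (Set.range_nonempty Ψ) (isCompact_range hΦ.continuous).isBounded
      (isCompact_range hΨ.continuous).isBounded
  set P : M → Set X := fun i => {x : X | dist (Ψ x) (Φ i) < ε'} with hP
  -- every point of X is ε'-close to some Φ i
  have exI : ∀ x : X, ∃ i : M, x ∈ P i := by
    intro x
    obtain ⟨y, ⟨i, rfl⟩, hy⟩ :=
      Metric.exists_dist_lt_of_hausdorffDist_lt' (Set.mem_range_self x) hDε' hne
    exact ⟨i, by simpa [hP, dist_comm] using hy⟩
  refine ⟨P, ?_, ?_, ?_, ?_, ?_⟩
  · -- nonempty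
    intro i
    obtain ⟨y, ⟨x, rfl⟩, hy⟩ :=
      Metric.exists_dist_lt_of_hausdorffDist_lt (Set.mem_range_self i) hDε' hne
    exact ⟨x, by simpa [hP, dist_comm] using hy⟩
  · -- pairwise disjoint
    intro i j hij
    rw [Set.disjoint_left]
    intro x hxi hxj
    have h1 : dist (Φ i) (Φ j) ≤ dist (Φ i) (Ψ x) + dist (Ψ x) (Φ j) := dist_triangle _ _ _
    rw [dist_comm (Φ i)] at h1
    have h2 : dist (Φ i) (Φ j) = dist i j := hΦ.dist_eq i j
    have h3 : dist (Φ j) (Φ i) = dist (Φ i) (Φ j) := dist_comm _ _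
    have h4 : dist (Φ i) (Ψ x) = dist (Ψ x) (Φ i) := dist_comm _ _
    have := hεs i j hij
    simp only [hP, Set.mem_setOf_eq] at hxi hxj
    linarith
  · -- covers
    exact Set.eq_univ_of_forall fun x => Set.mem_iUnion.mpr (exI x)
  · -- small diameter
    intro i
    have : Metric.diam (P i) ≤ 2 * ε' := by
      apply Metric.diam_le_of_forall_dist_le (by linarith)
      intro x hx y hy
      simp only [hP, Set.mem_setOf_eq] at hx hy
      have := dist_triangle (Ψ x) (Φ i) (Ψ y)
      rw [dist_comm (Φ i)] at this
      have hd : dist x y = dist (Ψ x) (Ψ y) := (hΨ.dist_eq x y).symm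
      linarith
    linarith
  · -- distances realized
    intro i j x hx x' hx'
    simp only [hP, Set.mem_setOf_eq] at hx hx'
    have hd : dist x x' = dist (Ψ x) (Ψ x') := (hΨ.dist_eq x x').symm
    have hij : dist i j = dist (Φ i) (Φ j) := (hΦ.dist_eq i j).symm
    have t1 : dist (Ψ x) (Ψ x') ≤ dist (Ψ x) (Φ i) + dist (Φ i) (Φ j) + dist (Φ j) (Ψ x') :=
      dist_triangle4 _ _ _ _
    have t2 : dist (Φ i) (Φ j) ≤ dist (Φ i) (Ψ x) + dist (Ψ x) (Ψ x') + dist (Ψ x') (Φ j) :=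
      dist_triangle4 _ _ _ _
    rw [dist_comm (Φ j)] at t1
    rw [dist_comm (Φ i)] at t2
    have s1 : dist (Φ j) (Φ i) = dist (Φ i) (Φ j) := dist_comm _ _
    have s2 : dist (Φ i) (Ψ x) = dist (Ψ x) (Φ i) := dist_comm _ _
    rw [abs_lt]
    constructor <;> [skip; skip] <;> linarith
end

section
/- Let M = {1,…,n} be a finite metric space, 0 < ε ≤ s(M)/2, and X a compact metric space with 2·d_GH(M,X) < ε. If {Xᵢ} and {Yᵢ} are two partitions of X indexed by M, each satisfying diam of every part < ε and |d(x,x') − d(i,j)| < ε for all x in the i-th part and x' in the j-th part, then the partitions coincide up to a permutation of indices: there is a bijection φ of {1,…,n} with Yᵢ = X_{φ(i)} for all i. -/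
/-- under `0 < ε ≤ s(M)/2` and `2·d_GH(M,X) < ε`, any two canonical
partitions of `X` with respect to `M` coincide up to a permutation of indices. -/
theorem stmt_5 (M X : Type) [MetricSpace M] [Fintype M] [Nonempty M]
    [MetricSpace X] [CompactSpace X] [Nonempty X]
    (ε : ℝ) (hε : 0 < ε) (hεs : ∀ i j : M, i ≠ j → 2 * ε ≤ dist i j)
    (hX : 2 * GromovHausdorff.ghDist M X < ε)
    (P Q : M → Set X) (hP : IsCanonPartition ε P) (hQ : IsCanonPartition ε Q) :
    ∃ φ : Equiv.Perm M, ∀ i : M, Q i = P (φ i) := by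
  obtain ⟨hPne, hPdisj, hPcov, hPdiam, hPdist⟩ := hP
  obtain ⟨hQne, hQdisj, hQcov, hQdiam, hQdist⟩ := hQ
  have bdd : ∀ s : Set X, Bornology.IsBounded s := fun s =>
    (isCompact_univ.isBounded).subset (Set.subset_univ s)
  -- key: points close (within 2ε of matching index distances) must share index
  have key : ∀ (i j : M) (x y : X), x ∈ P i → y ∈ P j → dist x y < ε → i = j := by
    intro i j x y hx hy hxy
    by_contra hne
    have h1 := hPdist i j x hx y hy
    have h2 := hεs i j hne
    have := abs_lt.mp h1
    linarith [this.1]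
  -- for each i pick x ∈ Q i and its P-index
  have hfind : ∀ i : M, ∃ j : M, Q i = P j := by
    intro i
    obtain ⟨x, hx⟩ := hQne i
    have hxU : x ∈ ⋃ k, P k := by rw [hPcov]; trivial
    obtain ⟨j, hxj⟩ := Set.mem_iUnion.mp hxU
    refine ⟨j, Set.eq_of_subset_of_subset ?_ ?_⟩
    · intro y hy
      have hyU : y ∈ ⋃ k, P k := by rw [hPcov]; trivial
      obtain ⟨k, hyk⟩ := Set.mem_iUnion.mp hyU
      have hdxy : dist x y < ε :=
        lt_of_le_of_lt (Metric.dist_le_diam_of_mem (bdd _) hx hy) (hQdiam i)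
      have : j = k := key j k x y hxj hyk hdxy
      rwa [this]
    · intro z hz
      have hzU : z ∈ ⋃ k, Q k := by rw [hQcov]; trivial
      obtain ⟨k, hzk⟩ := Set.mem_iUnion.mp hzU
      have hdxz : dist x z < ε :=
        lt_of_le_of_lt (Metric.dist_le_diam_of_mem (bdd _) hxj hz) (hPdiam j)
      have hik : i = k := by
        by_contra hne
        have h1 := hQdist i k x hx z hzk
        have h2 := hεs i k hne
        have := abs_lt.mp h1
        linarith [this.1]
      rwa [← hik] at hzk
  choose f hf using hfind
  have hinj : Function.Injective f := by
    intro i i' h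
    by_contra hne
    obtain ⟨x, hx⟩ := hQne i
    have hx' : x ∈ Q i' := by
      rw [hf i'] at *; rw [hf i] at hx; rwa [h] at hx
    exact (hQdisj hne).ne_of_mem hx hx' rfl
  exact ⟨Equiv.ofBijective f (Finite.injective_iff_bijective.mp hinj),
    fun i => hf i⟩
end

section
/- Let M = {1,…,n} (n ≥ 3) be a finite metric space with e(M) > 0, where e(M) is the infimum of |d(x,y) − d(z,w)| over distinct unordered pairs {x,y} ≠ {z,w} with x≠y, z≠w. Let 0 < ε ≤ (1/2)·min{s(M), e(M)} and let X be compact with 2·d_GH(M,X) < ε. If {Xᵢ} and {X'ᵢ} are two partitions of X indexed by M, each satisfying diam of every part < ε and |d(x,x') − d(i,j)| < ε for x in the i-th part and x' in the j-th part, then Xᵢ = X'ᵢ for every i. -/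
/-- let `M` have `n ≥ 3` points, with all nonzero distances pairwise
distinct (`e(M) > 0`), and let `0 < ε ≤ (1/2)·min{s(M), e(M)}` (expressed pointwise:
`2ε ≤ dist i j` for `i ≠ j`, and `2ε ≤ | dist x y − dist z w |` for distinct unordered
pairs). If `2·d_GH(M,X) < ε`, then any two canonical partitions of `X` w.r.t. `M`
coincide (with matching indices). -/
theorem stmt_6 (M X : Type) [MetricSpace M] [Fintype M] [Nonempty M]
    (hcard : 3 ≤ Fintype.card M)
    [MetricSpace X] [CompactSpace X] [Nonempty X]
    (he : ∀ x y z w : M, x ≠ y → z ≠ w → ({x, y} : Set M) ≠ {z, w} →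
      dist x y ≠ dist z w)
    (ε : ℝ) (hε : 0 < ε)
    (hεs : ∀ i j : M, i ≠ j → 2 * ε ≤ dist i j)
    (hεe : ∀ x y z w : M, x ≠ y → z ≠ w → ({x, y} : Set M) ≠ {z, w} →
      2 * ε ≤ |dist x y - dist z w|)
    (hX : 2 * GromovHausdorff.ghDist M X < ε)
    (P Q : M → Set X) (hP : IsCanonPartition ε P) (hQ : IsCanonPartition ε Q) :
    ∀ i : M, P i = Q i := by
  classical
  obtain ⟨hPne, hPdisj, hPuniv, hPdiam, hPdist⟩ := hP
  obtain ⟨hQne, hQdisj, hQuniv, hQdiam, hQdist⟩ := hQ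
  have hQmem : ∀ x : X, ∃ j, x ∈ Q j := by
    intro x
    have : x ∈ ⋃ i, Q i := hQuniv ▸ Set.mem_univ x
    simpa using this
  have hPmem : ∀ x : X, ∃ j, x ∈ P j := by
    intro x
    have : x ∈ ⋃ i, P i := hPuniv ▸ Set.mem_univ x
    simpa using this
  have hbdd : ∀ s : Set X, Bornology.IsBounded s := fun s =>
    (isCompact_univ.isBounded).subset (Set.subset_univ s)
  -- claim A : points of the same P-part lie in the same Q-part
  have claimA : ∀ (i j j' : M) (x x' : X), x ∈ P i → x' ∈ P i →
      x ∈ Q j → x' ∈ Q j' → j = j' := by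
    intro i j j' x x' hx hx' hj hj'
    by_contra hne
    have h1 : dist x x' < ε :=
      lt_of_le_of_lt (Metric.dist_le_diam_of_mem (hbdd _) hx hx') (hPdiam i)
    have h2 := abs_lt.mp (hQdist j j' x hj x' hj')
    have h3 := hεs j j' hne
    linarith [h2.1, h2.2]
  have claimB : ∀ (i j j' : M) (x x' : X), x ∈ Q i → x' ∈ Q i →
      x ∈ P j → x' ∈ P j' → j = j' := by
    intro i j j' x x' hx hx' hj hj'
    by_contra hne
    have h1 : dist x x' < ε :=
      lt_of_le_of_lt (Metric.dist_le_diam_of_mem (hbdd _) hx hx') (hQdiam i)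
    have h2 := abs_lt.mp (hPdist j j' x hj x' hj')
    have h3 := hεs j j' hne
    linarith [h2.1, h2.2]
  have keyσ : ∀ i, ∃ j, P i ⊆ Q j := by
    intro i
    obtain ⟨x, hx⟩ := hPne i
    obtain ⟨j, hj⟩ := hQmem x
    refine ⟨j, fun y hy => ?_⟩
    obtain ⟨j', hj'⟩ := hQmem y
    exact (claimA i j' j y x hy hx hj' hj) ▸ hj'
  have keyτ : ∀ i, ∃ j, Q i ⊆ P j := by
    intro i
    obtain ⟨x, hx⟩ := hQne i
    obtain ⟨j, hj⟩ := hPmem x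
    refine ⟨j, fun y hy => ?_⟩
    obtain ⟨j', hj'⟩ := hPmem y
    exact (claimB i j' j y x hy hx hj' hj) ▸ hj'
  choose σ hσ using keyσ
  choose τ hτ using keyτ
  have hτσ : ∀ i, τ (σ i) = i := by
    intro i
    obtain ⟨x, hx⟩ := hPne i
    have hx2 : x ∈ P (τ (σ i)) := hτ _ (hσ i hx)
    by_contra hne
    exact Set.disjoint_left.mp (hPdisj hne) hx2 hx
  have hPeqQ : ∀ i, P i = Q (σ i) := by
    intro i
    refine Set.Subset.antisymm (hσ i) ?_
    have := hτ (σ i)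
    rw [hτσ i] at this
    exact this
  have hinj : Function.Injective σ := by
    intro i j h
    have h1 := hτσ i
    rw [h, hτσ j] at h1
    exact h1.symm
  have hset : ∀ i j : M, i ≠ j → ({i, j} : Set M) = {σ i, σ j} := by
    intro i j hij
    by_contra hne
    obtain ⟨x, hx⟩ := hPne i
    obtain ⟨y, hy⟩ := hPne j
    have h1 := abs_lt.mp (hPdist i j x hx y hy)
    have h2 := abs_lt.mp (hQdist (σ i) (σ j) x (hσ i hx) y (hσ j hy))
    have hσij : σ i ≠ σ j := fun h => hij (hinj h)
    have h3 := hεe i j (σ i) (σ j) hij hσij hne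
    rcases le_abs.mp h3 with h | h
    · linarith [h1.1, h1.2, h2.1, h2.2]
    · linarith [h1.1, h1.2, h2.1, h2.2]
  intro i
  have hσi : σ i = i := by
    by_contra hne
    have hcard2 : 1 < (Finset.univ.erase i : Finset M).card := by
      rw [Finset.card_erase_of_mem (Finset.mem_univ i), Finset.card_univ]
      omega
    obtain ⟨j, hj, k, hk, hjk⟩ := Finset.one_lt_card.mp hcard2
    have hji : j ≠ i := (Finset.mem_erase.mp hj).1
    have hki : k ≠ i := (Finset.mem_erase.mp hk).1
    have hj' : σ i = j := by
      have hs := hset i j (Ne.symm hji)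
      have hm : σ i ∈ ({i, j} : Set M) := by rw [hs]; exact Set.mem_insert _ _
      rcases Set.mem_insert_iff.mp hm with h | h
      · exact absurd h hne
      · simpa using h
    have hk' : σ i = k := by
      have hs := hset i k (Ne.symm hki)
      have hm : σ i ∈ ({i, k} : Set M) := by rw [hs]; exact Set.mem_insert _ _
      rcases Set.mem_insert_iff.mp hm with h | h
      · exact absurd h hne
      · simpa using h
    exact hjk (hj'.symm.trans hk')
  rw [hPeqQ i, hσi]
end

section
/- Let M = {1,…,n} be a finite metric space, 0 < ε ≤ s(M)/4, and X, Y compact metric spaces with 2·d_GH(M,X) < ε and 2·d_GH(M,Y) < ε. Let {Xᵢ} and {Yᵢ} be canonical partitions of X and Y with respect to M (parts of diameter < ε realizing the distances of M within ε). Then for every optimal correspondence R between X and Y there exists a bijection ψ of {1,…,n} such that R = ⊔ᵢ Rᵢ with Rᵢ a correspondence between Xᵢ and Y_{ψ(i)}. In particular, for every (x,y) ∈ R, if x ∈ Xᵢ then y ∈ Y_{ψ(i)}. -/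
/-- let `0 < ε ≤ s(M)/4` (pointwise: `4ε ≤ dist i j` for `i ≠ j`), let
`X`, `Y` be compact with `2·d_GH(M,X) < ε`, `2·d_GH(M,Y) < ε`, with canonical
partitions `{Xᵢ}`, `{Yᵢ}`. Then every optimal correspondence `R` between `X` and `Y`
splits as `R = ⊔ᵢ Rᵢ` with `Rᵢ` a correspondence between `Xᵢ` and `Y_{ψ(i)}` for some
bijection `ψ` of the index set; in particular `(x,y) ∈ R` and `x ∈ Xᵢ` imply
`y ∈ Y_{ψ(i)}`. -/
theorem stmt_7 (M X Y : Type) [MetricSpace M] [Fintype M] [Nonempty M]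
    [MetricSpace X] [CompactSpace X] [Nonempty X]
    [MetricSpace Y] [CompactSpace Y] [Nonempty Y]
    (ε : ℝ) (hε : 0 < ε) (hεs : ∀ i j : M, i ≠ j → 4 * ε ≤ dist i j)
    (hX : 2 * GromovHausdorff.ghDist M X < ε) (hY : 2 * GromovHausdorff.ghDist M Y < ε)
    (P : M → Set X) (hP : IsCanonPartition ε P)
    (Q : M → Set Y) (hQ : IsCanonPartition ε Q)
    (R : Set (X × Y)) (hR : IsCorrespondence R)
    (hopt : relDistortion R = 2 * GromovHausdorff.ghDist X Y) :
    ∃ ψ : Equiv.Perm M,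
      (∀ p ∈ R, ∀ i : M, p.1 ∈ P i → p.2 ∈ Q (ψ i)) ∧
      (∀ p ∈ R, ∀ i : M, p.2 ∈ Q (ψ i) → p.1 ∈ P i) ∧
      (∀ i : M, ∀ x ∈ P i, ∃ y ∈ Q (ψ i), (x, y) ∈ R) ∧
      (∀ i : M, ∀ y ∈ Q (ψ i), ∃ x ∈ P i, (x, y) ∈ R) := by
  obtain ⟨hPne, hPdisj, hPcov, hPdiam, hPdist⟩ := hP
  obtain ⟨hQne, hQdisj, hQcov, hQdiam, hQdist⟩ := hQ
  obtain ⟨hR1, hR2⟩ := hR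
  -- every point of X is in some part, similarly Y
  have hPmem : ∀ x : X, ∃ i, x ∈ P i := by
    intro x
    have : x ∈ ⋃ i, P i := hPcov ▸ Set.mem_univ x
    exact Set.mem_iUnion.mp this
  have hQmem : ∀ y : Y, ∃ i, y ∈ Q i := by
    intro y
    have : y ∈ ⋃ i, Q i := hQcov ▸ Set.mem_univ y
    exact Set.mem_iUnion.mp this
  -- distortion set is bounded above
  have hbdd : BddAbove {v : ℝ | ∃ p ∈ R, ∃ q ∈ R, v = |dist p.1 q.1 - dist p.2 q.2|} := by
    refine ⟨Metric.diam (Set.univ : Set X) + Metric.diam (Set.univ : Set Y), ?_⟩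
    rintro v ⟨p, hp, q, hq, rfl⟩
    have h1 : dist p.1 q.1 ≤ Metric.diam (Set.univ : Set X) :=
      Metric.dist_le_diam_of_mem isCompact_univ.isBounded trivial trivial
    have h2 : dist p.2 q.2 ≤ Metric.diam (Set.univ : Set Y) :=
      Metric.dist_le_diam_of_mem isCompact_univ.isBounded trivial trivial
    have h3 := dist_nonneg (x := p.1) (y := q.1)
    have h4 := dist_nonneg (x := p.2) (y := q.2)
    rw [abs_sub_le_iff]
    constructor <;> linarith
  -- triangle inequality for ghDist
  have htri : GromovHausdorff.ghDist X Y ≤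
      GromovHausdorff.ghDist M X + GromovHausdorff.ghDist M Y := by
    unfold GromovHausdorff.ghDist
    rw [dist_comm (GromovHausdorff.toGHSpace M) (GromovHausdorff.toGHSpace X)]
    exact dist_triangle _ _ _
  -- distortion bound
  have hdis : ∀ p ∈ R, ∀ q ∈ R, |dist p.1 q.1 - dist p.2 q.2| < 2 * ε := by
    intro p hp q hq
    have hle : |dist p.1 q.1 - dist p.2 q.2| ≤ relDistortion R :=
      le_csSup hbdd ⟨p, hp, q, hq, rfl⟩
    rw [hopt] at hle
    linarith
  have hPbdd : ∀ i : M, Bornology.IsBounded (P i) := fun i =>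
    isCompact_univ.isBounded.subset (Set.subset_univ _)
  have hQbdd : ∀ i : M, Bornology.IsBounded (Q i) := fun i =>
    isCompact_univ.isBounded.subset (Set.subset_univ _)
  -- key lemma 1 : same P part forces same Q part
  have key1 : ∀ p ∈ R, ∀ q ∈ R, ∀ i k l : M, p.1 ∈ P i → q.1 ∈ P i →
      p.2 ∈ Q k → q.2 ∈ Q l → k = l := by
    intro p hp q hq i k l hpi hqi hpk hql
    by_contra hkl
    have h1 : dist p.1 q.1 < ε :=
      lt_of_le_of_lt (Metric.dist_le_diam_of_mem (hPbdd i) hpi hqi) (hPdiam i)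
    have h2 := hdis p hp q hq
    have h3 := hQdist k l p.2 hpk q.2 hql
    have h4 := hεs k l hkl
    rw [abs_sub_lt_iff] at h2 h3
    linarith [h2.1, h2.2, h3.1, h3.2]
  -- key lemma 2 : same Q part forces same P part
  have key2 : ∀ p ∈ R, ∀ q ∈ R, ∀ k i l : M, p.2 ∈ Q k → q.2 ∈ Q k →
      p.1 ∈ P i → q.1 ∈ P l → i = l := by
    intro p hp q hq k i l hpk hqk hpi hql
    by_contra hil
    have h1 : dist p.2 q.2 < ε :=
      lt_of_le_of_lt (Metric.dist_le_diam_of_mem (hQbdd k) hpk hqk) (hQdiam k)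
    have h2 := hdis p hp q hq
    have h3 := hPdist i l p.1 hpi q.1 hql
    have h4 := hεs i l hil
    rw [abs_sub_lt_iff] at h2 h3
    linarith [h2.1, h2.2, h3.1, h3.2]
  -- construct ψ0
  choose x0 hx0 using hPne
  choose y0 hy0 using fun i => hR1 (x0 i)
  choose ψ0 hψ0 using fun i => hQmem (y0 i)
  -- main property of ψ0
  have main : ∀ p ∈ R, ∀ i : M, p.1 ∈ P i → p.2 ∈ Q (ψ0 i) := by
    intro p hp i hpi
    obtain ⟨j, hj⟩ := hQmem p.2
    have : j = ψ0 i := key1 p hp (x0 i, y0 i) (hy0 i) i j (ψ0 i) hpi (hx0 i) hj (hψ0 i)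
    exact this ▸ hj
  have hinj : Function.Injective ψ0 := by
    intro i i' h
    exact key2 (x0 i, y0 i) (hy0 i) (x0 i', y0 i') (hy0 i') (ψ0 i) i i'
      (hψ0 i) (h ▸ hψ0 i') (hx0 i) (hx0 i')
  refine ⟨Equiv.ofBijective ψ0 (Finite.injective_iff_bijective.mp hinj), ?_, ?_, ?_, ?_⟩
  · intro p hp i hpi
    exact main p hp i hpi
  · intro p hp i hpq
    obtain ⟨i', hi'⟩ := hPmem p.1
    have h1 : p.2 ∈ Q (ψ0 i') := main p hp i' hi'
    have h2 : ψ0 i' = ψ0 i := by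
      by_contra h
      exact (hQdisj h).le_bot ⟨h1, hpq⟩ |>.elim
    have : i' = i := hinj h2
    exact this ▸ hi'
  · intro i x hx
    obtain ⟨y, hy⟩ := hR1 x
    exact ⟨y, main (x, y) hy i hx, hy⟩
  · intro i y hy
    obtain ⟨x, hx⟩ := hR2 y
    obtain ⟨i', hi'⟩ := hPmem x
    have h1 : y ∈ Q (ψ0 i') := main (x, y) hx i' hi'
    have h2 : ψ0 i' = ψ0 i := by
      by_contra h
      exact (hQdisj h).le_bot ⟨h1, hy⟩ |>.elim
    have : i' = i := hinj h2
    exact ⟨x, this ▸ hi', hx⟩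
end

section
/- Let M = {1,…,n} (n ≥ 3) be a finite metric space with e(M) > 0, and let 0 < ε ≤ (1/4)·min{s(M), e(M)}. Let X, Y be compact metric spaces with 2·d_GH(M,X) < ε and 2·d_GH(M,Y) < ε, with canonical partitions {Xᵢ}, {Yᵢ} with respect to M. Then every optimal correspondence R between X and Y splits as R = ⊔ᵢ Rᵢ where each Rᵢ is a correspondence between Xᵢ and Yᵢ (the bijection of indices is the identity). -/
/-- let `M` have `n ≥ 3` points with `e(M) > 0`, and let
`0 < ε ≤ (1/4)·min{s(M), e(M)}` (pointwise form). Let `X`, `Y` be compact with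
`2·d_GH(M,X) < ε`, `2·d_GH(M,Y) < ε`, with canonical partitions `{Xᵢ}`, `{Yᵢ}`.
Then every optimal correspondence `R` between `X` and `Y` splits as `R = ⊔ᵢ Rᵢ`,
where `Rᵢ` is a correspondence between `Xᵢ` and `Yᵢ` (identity index bijection). -/
theorem stmt_8 (M X Y : Type) [MetricSpace M] [Fintype M] [Nonempty M]
    (hcard : 3 ≤ Fintype.card M)
    [MetricSpace X] [CompactSpace X] [Nonempty X]
    [MetricSpace Y] [CompactSpace Y] [Nonempty Y]
    (he : ∀ x y z w : M, x ≠ y → z ≠ w → ({x, y} : Set M) ≠ {z, w} →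
      dist x y ≠ dist z w)
    (ε : ℝ) (hε : 0 < ε)
    (hεs : ∀ i j : M, i ≠ j → 4 * ε ≤ dist i j)
    (hεe : ∀ x y z w : M, x ≠ y → z ≠ w → ({x, y} : Set M) ≠ {z, w} →
      4 * ε ≤ |dist x y - dist z w|)
    (hX : 2 * GromovHausdorff.ghDist M X < ε) (hY : 2 * GromovHausdorff.ghDist M Y < ε)
    (P : M → Set X) (hP : IsCanonPartition ε P)
    (Q : M → Set Y) (hQ : IsCanonPartition ε Q)
    (R : Set (X × Y)) (hR : IsCorrespondence R)
    (hopt : relDistortion R = 2 * GromovHausdorff.ghDist X Y) :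
    (∀ p ∈ R, ∀ i : M, p.1 ∈ P i ↔ p.2 ∈ Q i) ∧
      (∀ i : M, ∀ x ∈ P i, ∃ y ∈ Q i, (x, y) ∈ R) ∧
      (∀ i : M, ∀ y ∈ Q i, ∃ x ∈ P i, (x, y) ∈ R) := by
  obtain ⟨hPne, hPdisj, hPcov, hPdiam, hPdist⟩ := hP
  obtain ⟨hQne, hQdisj, hQcov, hQdiam, hQdist⟩ := hQ
  have hPmem : ∀ x : X, ∃ i, x ∈ P i := fun x =>
    Set.mem_iUnion.mp (hPcov.symm ▸ Set.mem_univ x)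
  have hQmem : ∀ y : Y, ∃ i, y ∈ Q i := fun y =>
    Set.mem_iUnion.mp (hQcov.symm ▸ Set.mem_univ y)
  have hPuniq : ∀ (x : X) (i j : M), x ∈ P i → x ∈ P j → i = j := by
    intro x i j hi hj
    by_contra h
    exact Set.disjoint_left.mp (hPdisj h) hi hj
  have hbdd : BddAbove {v : ℝ | ∃ p ∈ R, ∃ q ∈ R, v = |dist p.1 q.1 - dist p.2 q.2|} := by
    refine ⟨Metric.diam (Set.univ : Set X) + Metric.diam (Set.univ : Set Y), ?_⟩
    rintro v ⟨p, hp, q, hq, rfl⟩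
    have h1 : dist p.1 q.1 ≤ Metric.diam (Set.univ : Set X) :=
      Metric.dist_le_diam_of_mem (Metric.isBounded_of_compactSpace) trivial trivial
    have h2 : dist p.2 q.2 ≤ Metric.diam (Set.univ : Set Y) :=
      Metric.dist_le_diam_of_mem (Metric.isBounded_of_compactSpace) trivial trivial
    calc |dist p.1 q.1 - dist p.2 q.2| ≤ |dist p.1 q.1| + |dist p.2 q.2| := abs_sub _ _
      _ = dist p.1 q.1 + dist p.2 q.2 := by
          rw [abs_of_nonneg dist_nonneg, abs_of_nonneg dist_nonneg]
      _ ≤ _ := add_le_add h1 h2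
  have hdisR : relDistortion R < 2 * ε := by
    rw [hopt]
    have t := dist_triangle (GromovHausdorff.toGHSpace X) (GromovHausdorff.toGHSpace M)
      (GromovHausdorff.toGHSpace Y)
    have hc : dist (GromovHausdorff.toGHSpace X) (GromovHausdorff.toGHSpace M)
        = dist (GromovHausdorff.toGHSpace M) (GromovHausdorff.toGHSpace X) := dist_comm _ _
    simp only [GromovHausdorff.ghDist] at *
    linarith
  have hdis2 : ∀ p ∈ R, ∀ q ∈ R, |dist p.1 q.1 - dist p.2 q.2| < 2 * ε := fun p hp q hq =>
    lt_of_le_of_lt (le_csSup hbdd ⟨p, hp, q, hq, rfl⟩) hdisR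
  have key : ∀ p ∈ R, ∀ q ∈ R, ∀ i j k l : M, p.1 ∈ P i → p.2 ∈ Q j → q.1 ∈ P k →
      q.2 ∈ Q l → i ≠ k → j ≠ l ∧ ({i, k} : Set M) = {j, l} := by
    intro p hp q hq i j k l hpi hpj hqk hql hik
    have h1 := hPdist i k p.1 hpi q.1 hqk
    have h2 := hQdist j l p.2 hpj q.2 hql
    have h3 := hdis2 p hp q hq
    have h4 : |dist i k - dist j l| < 4 * ε := by
      have e1 : |dist i k - dist p.1 q.1| < ε := by rw [abs_sub_comm]; exact h1
      have t1 := abs_sub_le (dist i k) (dist p.1 q.1) (dist j l)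
      have t2 := abs_sub_le (dist p.1 q.1) (dist p.2 q.2) (dist j l)
      linarith
    have hjl : j ≠ l := by
      intro h
      rw [h, dist_self, sub_zero, abs_of_nonneg dist_nonneg] at h4
      exact absurd h4 (not_lt.mpr (hεs i k hik))
    refine ⟨hjl, ?_⟩
    by_contra hne
    exact absurd h4 (not_lt.mpr (hεe i k j l hik hjl hne))
  have main : ∀ p ∈ R, ∀ i j : M, p.1 ∈ P i → p.2 ∈ Q j → i = j := by
    intro p hp i j hpi hpj
    by_contra hij
    classical
    obtain ⟨k, hki, hkj⟩ : ∃ k : M, k ≠ i ∧ k ≠ j := by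
      by_contra h
      push_neg at h
      have hsub : (Finset.univ : Finset M) ⊆ {i, j} := by
        intro k _
        by_cases hk : k = i
        · simp [hk]
        · simp [h k hk]
      have h1 := Finset.card_le_card hsub
      have h2 : ({i, j} : Finset M).card ≤ 2 := Finset.card_insert_le _ _
      rw [Finset.card_univ] at h1
      omega
    obtain ⟨x', hx'⟩ := hPne k
    obtain ⟨y', hxy'⟩ := hR.1 x'
    obtain ⟨l, hy'⟩ := hQmem y'
    obtain ⟨hjl, hset⟩ := key p hp (x', y') hxy' i j k l hpi hpj hx' hy'
      (fun h => hki h.symm)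
    have hjmem : j ∈ ({i, k} : Set M) := by rw [hset]; exact Set.mem_insert _ _
    rcases hjmem with h | h
    · exact hij h.symm
    · exact hkj (Set.mem_singleton_iff.mp h).symm
  refine ⟨?_, ?_, ?_⟩
  · intro p hp i
    obtain ⟨a, ha⟩ := hPmem p.1
    obtain ⟨b, hb⟩ := hQmem p.2
    have hab := main p hp a b ha hb
    constructor
    · intro hi
      have : i = a := hPuniq p.1 i a hi ha
      rw [this, hab]; exact hb
    · intro hi
      have : b = i := by
        by_contra hbi
        exact Set.disjoint_left.mp (hQdisj hbi) hb hi
      subst hab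
      subst this
      exact ha
  · intro i x hx
    obtain ⟨y, hy⟩ := hR.1 x
    obtain ⟨b, hb⟩ := hQmem y
    have h := main (x, y) hy i b hx hb
    exact ⟨y, h ▸ hb, hy⟩
  · intro i y hy
    obtain ⟨x, hx⟩ := hR.2 y
    obtain ⟨a, ha⟩ := hPmem x
    have h := main (x, y) hx a i ha hy
    exact ⟨x, h ▸ ha, hx⟩
end

section
/- Let M = {1,…,n} and N = {1,…,n} be finite metric spaces on the same point set, with distance functions |ij|_M and |ij|_N, and suppose t(N) > 0. Let 0 < ε ≤ min{s(M)/2, 2s(N)/3, t(N)/3}, let X be a compact metric space with 2·d_GH(M,X) < ε, and let {Xᵢ} be a canonical partition of X with respect to M. Define ρ on X × X by ρ(x,x') = d(x,x') − |ij|_M + |ij|_N for x ∈ Xᵢ, x' ∈ Xⱼ. Then ρ is a metric on X. -/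
/-- let `M`, `N` be finite metric spaces on the same point set
(identified by a bijection `e : M ≃ N`) with `t(N) > 0`, let
`0 < ε ≤ min{s(M)/2, 2s(N)/3, t(N)/3}` (expressed pointwise), let `X` be compact with
`2·d_GH(M,X) < ε` and canonical partition `{Xᵢ}`.  Then the function
`ρ(x,x') = d(x,x') − |ij|_M + |ij|_N` (for `x ∈ Xᵢ`, `x' ∈ Xⱼ`) is a metric on `X`. -/
theorem stmt_9 (M N X : Type) [MetricSpace M] [Fintype M] [Nonempty M]
    [MetricSpace N] [Fintype N] [Nonempty N] (e : M ≃ N)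
    [MetricSpace X] [CompactSpace X] [Nonempty X]
    (htN : ∀ x y z : N, x ≠ y → y ≠ z → x ≠ z → 0 < dist x y + dist y z - dist x z)
    (ε : ℝ) (hε : 0 < ε)
    (hεsM : ∀ i j : M, i ≠ j → 2 * ε ≤ dist i j)
    (hεsN : ∀ i j : N, i ≠ j → 3 * ε ≤ 2 * dist i j)
    (hεtN : ∀ x y z : N, x ≠ y → y ≠ z → x ≠ z →
      3 * ε ≤ dist x y + dist y z - dist x z)
    (hX : 2 * GromovHausdorff.ghDist M X < ε)
    (P : M → Set X) (hP : IsCanonPartition ε P)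
    (ρ : X → X → ℝ)
    (hρ : ∀ i j : M, ∀ x ∈ P i, ∀ x' ∈ P j,
      ρ x x' = dist x x' - dist i j + dist (e i) (e j)) :
    (∀ x y : X, ρ x y = 0 ↔ x = y) ∧
      (∀ x y : X, ρ x y = ρ y x) ∧
      (∀ x y z : X, ρ x z ≤ ρ x y + ρ y z) := by
  obtain ⟨hne, hdisj, hcover, hdiam, hclose⟩ := hP
  have hmem : ∀ x : X, ∃ i, x ∈ P i := by
    intro x
    have : x ∈ ⋃ i, P i := hcover.symm ▸ Set.mem_univ x
    simpa using this
  refine ⟨?_, ?_, ?_⟩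
  · intro x y
    obtain ⟨i, hx⟩ := hmem x
    obtain ⟨j, hy⟩ := hmem y
    constructor
    · intro h0
      rw [hρ i j x hx y hy] at h0
      by_cases hij : i = j
      · subst hij
        simp only [dist_self, sub_zero, add_zero] at h0
        exact dist_eq_zero.mp h0
      · exfalso
        have h1 := abs_lt.mp (hclose i j x hx y hy)
        have h2 := hεsN (e i) (e j) (fun h => hij (e.injective h))
        linarith [h1.1, h1.2]
    · rintro rfl
      have h := hρ i i x hx x hx
      simpa using h
  · intro x y
    obtain ⟨i, hx⟩ := hmem x
    obtain ⟨j, hy⟩ := hmem y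
    rw [hρ i j x hx y hy, hρ j i y hy x hx, dist_comm x y, dist_comm i j,
      dist_comm (e i) (e j)]
  · intro x y z
    obtain ⟨i, hx⟩ := hmem x
    obtain ⟨j, hy⟩ := hmem y
    obtain ⟨k, hz⟩ := hmem z
    rw [hρ i k x hx z hz, hρ i j x hx y hy, hρ j k y hy z hz]
    have txyz := dist_triangle x y z
    by_cases hij : i = j
    · subst hij
      have d1 : dist i i = (0 : ℝ) := dist_self i
      have d2 : dist (e i) (e i) = (0 : ℝ) := dist_self (e i)
      linarith
    · by_cases hjk : j = k
      · subst hjk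
        have d1 : dist j j = (0 : ℝ) := dist_self j
        have d2 : dist (e j) (e j) = (0 : ℝ) := dist_self (e j)
        linarith
      · by_cases hik : i = k
        · subst hik
          have h1 := abs_lt.mp (hclose i j x hx y hy)
          have h2 := abs_lt.mp (hclose j i y hy z hz)
          have h3 := abs_lt.mp (hclose i i x hx z hz)
          have h4 := hεsN (e i) (e j) (fun h => hij (e.injective h))
          have d1 : dist i i = (0 : ℝ) := dist_self i
          have d2 : dist (e i) (e i) = (0 : ℝ) := dist_self (e i)
          have c1 : dist j i = dist i j := dist_comm j i
          have c2 : dist (e j) (e i) = dist (e i) (e j) := dist_comm (e j) (e i)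
          linarith [h1.1, h1.2, h2.1, h2.2, h3.1, h3.2]
        · have h1 := abs_lt.mp (hclose i j x hx y hy)
          have h2 := abs_lt.mp (hclose j k y hy z hz)
          have h3 := abs_lt.mp (hclose i k x hx z hz)
          have h4 := hεtN (e i) (e j) (e k) (fun h => hij (e.injective h))
            (fun h => hjk (e.injective h)) (fun h => hik (e.injective h))
          linarith [h1.1, h1.2, h2.1, h2.2, h3.1, h3.2]
end

section
/- Let M = {1,…,n} (n ≥ 3) be a finite metric space in general position, i.e., δ(M) = min{s(M), e(M), t(M)} > 0, and let 0 < ε ≤ (1/2)·min{s(M), e(M)}. Then for every compact metric space X with 2·d_GH(M,X) < ε, the canonical partition of X with respect to M, together with its indexing by the points of M, is unique: if {Xᵢ} and {X'ᵢ} both satisfy diam < ε and the ε-approximation of distances of M, then Xᵢ = X'ᵢ for all i. -/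
/-- `M` is in general position: all nonzero distances are pairwise distinct (as
unordered pairs) and all triangle inequalities are strict. -/
def InGeneralPosition (M : Type*) [MetricSpace M] : Prop :=
  (∀ x y z w : M, x ≠ y → z ≠ w → ({x, y} : Set M) ≠ {z, w} → dist x y ≠ dist z w) ∧
    (∀ x y z : M, x ≠ y → y ≠ z → x ≠ z → dist x z < dist x y + dist y z)

/-- let `M` be a finite metric space with `n ≥ 3` points in general
position, and let `0 < ε ≤ (1/2)·min{s(M), e(M)}` (pointwise form).  Then for every
compact `X` with `2·d_GH(M,X) < ε` the canonical partition of `X` w.r.t. `M`,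
together with its indexing by points of `M`, is unique. -/
theorem stmt_11 (M X : Type) [MetricSpace M] [Fintype M] [Nonempty M]
    (hcard : 3 ≤ Fintype.card M)
    [MetricSpace X] [CompactSpace X] [Nonempty X]
    (hGP : InGeneralPosition M)
    (ε : ℝ) (hε : 0 < ε)
    (hεs : ∀ i j : M, i ≠ j → 2 * ε ≤ dist i j)
    (hεe : ∀ x y z w : M, x ≠ y → z ≠ w → ({x, y} : Set M) ≠ {z, w} →
      2 * ε ≤ |dist x y - dist z w|)
    (hX : 2 * GromovHausdorff.ghDist M X < ε)
    (P Q : M → Set X) (hP : IsCanonPartition ε P) (hQ : IsCanonPartition ε Q) :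
    ∀ i : M, P i = Q i := by
  obtain ⟨hPne, hPdisj, hPcov, hPdiam, hPdist⟩ := hP
  obtain ⟨hQne, hQdisj, hQcov, hQdiam, hQdist⟩ := hQ
  -- key: if x ∈ P i ∩ Q j then i = j
  have key : ∀ (x : X) (i j : M), x ∈ P i → x ∈ Q j → i = j := by
    intro x i j hxP hxQ
    by_contra hij
    -- every k ≠ i equals j
    have hall : ∀ k : M, k = i ∨ k = j := by
      intro k
      by_cases hki : k = i
      · exact Or.inl hki
      · right
        obtain ⟨y, hyP⟩ := hPne k
        have hy : y ∈ Set.univ := Set.mem_univ y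
        rw [← hQcov] at hy
        obtain ⟨l, hyQ⟩ := Set.mem_iUnion.1 hy
        have h1 : |dist x y - dist i k| < ε := hPdist i k x hxP y hyP
        have h2 : |dist x y - dist j l| < ε := hQdist j l x hxQ y hyQ
        have hik : 2 * ε ≤ dist i k := hεs i k (Ne.symm hki)
        have hjl : j ≠ l := by
          intro h
          rw [← h, dist_self] at h2
          have : dist i k < 2 * ε := by
            have := abs_lt.1 h1
            have := abs_lt.1 h2
            linarith
          linarith
        have hlt : |dist i k - dist j l| < 2 * ε := by
          have := abs_lt.1 h1
          have := abs_lt.1 h2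
          rw [abs_lt]
          constructor <;> linarith
        have hsets : ({i, k} : Set M) = {j, l} := by
          by_contra hne
          exact absurd hlt (not_lt.2 (hεe i k j l (Ne.symm hki) hjl hne))
        have : j ∈ ({i, k} : Set M) := by
          rw [hsets]; exact Set.mem_insert j {l}
        rcases this with h | h
        · exact absurd h.symm hij
        · exact h.symm
    -- card ≤ 2 contradiction
    have hle : Fintype.card M ≤ 2 := by
      classical
      have hsub : (Finset.univ : Finset M) ⊆ {i, j} := by
        intro k _
        rcases hall k with h | h <;> simp [h]
      calc Fintype.card M = Finset.univ.card := Finset.card_univ.symm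
        _ ≤ ({i, j} : Finset M).card := Finset.card_le_card hsub
        _ ≤ 2 := (Finset.card_insert_le i {j}).trans (by simp)
    omega
  intro i
  ext x
  constructor
  · intro hx
    have hx' : x ∈ Set.univ := Set.mem_univ x
    rw [← hQcov] at hx'
    obtain ⟨j, hj⟩ := Set.mem_iUnion.1 hx'
    rwa [key x i j hx hj]
  · intro hx
    have hx' : x ∈ Set.univ := Set.mem_univ x
    rw [← hPcov] at hx'
    obtain ⟨j, hj⟩ := Set.mem_iUnion.1 hx'
    rwa [← key x j i hj hx]
end

section
/- For any two finite metric spaces M and N in general position with the same number n ≥ 3 of points, there exists ε > 0 such that the open balls U_ε(M) and U_ε(N) in the Gromov–Hausdorff space are isometric. -/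
/-!
Fix `c > 0` such that distinct points of `M` and of `N` are `c` apart, distances of distinct
pairs differ by at least `c`, and every triangle inequality holds with slack `c`. A compact space
`X` close to `M` carries a labeling: a surjection `f : X → M` distorting distances by at most
`c / 3`. It is unique, because an approximate self-isometry of `M` must fix every pair of points,
hence every point once there are three of them. Moving `X` along `e : M ≃ N` replaces, for
differently labelled points, the distance of the labels in `M` by that of their images in `N`; the
slack `c` keeps this a metric. By uniqueness, every correspondence between two such spaces
respects the labels, so it has the same distortion after the move: the move is `1`-Lipschitz,
sends `M` to `N`, and moving back along `e.symm` undoes it, so it restricts to an isometry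
between the balls.
-/

open GromovHausdorff Metric Set Function Filter Topology

noncomputable section

theorem Set.InvOn.nonempty_isometryEquiv {α β : Type*} [PseudoMetricSpace α]
    [PseudoMetricSpace β] {s : Set α} {t : Set β} {f : α → β} {g : β → α} (h : InvOn g f s t)
    (hf : MapsTo f s t) (hg : MapsTo g t s) (hf₁ : ∀ x ∈ s, ∀ y ∈ s, dist (f x) (f y) ≤ dist x y)
    (hg₁ : ∀ x ∈ t, ∀ y ∈ t, dist (g x) (g y) ≤ dist x y) : Nonempty (s ≃ᵢ t) :=
  ⟨{ toFun := hf.restrict f s t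
     invFun := hg.restrict g t s
     left_inv := fun x => Subtype.ext (h.1 x.2)
     right_inv := fun y => Subtype.ext (h.2 y.2)
     isometry_toFun := Isometry.of_dist_eq fun x y => le_antisymm (hf₁ x x.2 y y.2) <| by
       have := hg₁ _ (hf x.2) _ (hf y.2)
       rw [h.1 x.2, h.1 y.2] at this
       exact this }⟩

section Correspondence

variable {X Y : Type*}

structure IsCorrespondence_s13 [PseudoMetricSpace X] [PseudoMetricSpace Y] (R : X → Y → Prop)
    (r : ℝ) : Prop where
  left_total : ∀ x, ∃ y, R x y
  right_total : ∀ y, ∃ x, R x y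
  abs_dist_sub_le : ∀ ⦃x y x' y'⦄, R x y → R x' y' → |dist x x' - dist y y'| ≤ r

variable [MetricSpace X] [CompactSpace X] [Nonempty X] [MetricSpace Y] [CompactSpace Y]
  [Nonempty Y]

theorem exists_isCorrespondence_of_dist_toGHSpace_lt {r : ℝ}
    (h : dist (toGHSpace X) (toGHSpace Y) < r) :
    ∃ R : X → Y → Prop, IsCorrespondence_s13 R (2 * r) := by
  set Φ := optimalGHInjl X Y
  set Ψ := optimalGHInjr X Y
  have hH : hausdorffDist (range Φ) (range Ψ) < r := by rwa [hausdorffDist_optimal]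
  have hfin : hausdorffEDist (range Φ) (range Ψ) ≠ ⊤ :=
    hausdorffEDist_ne_top_of_nonempty_of_bounded (range_nonempty _) (range_nonempty _)
      (isCompact_range (isometry_optimalGHInjl X Y).continuous).isBounded
      (isCompact_range (isometry_optimalGHInjr X Y).continuous).isBounded
  refine ⟨fun x y => dist (Φ x) (Ψ y) < r, ⟨fun x => ?_, fun y => ?_, fun x y x' y' hxy hxy' => ?_⟩⟩
  · obtain ⟨_, ⟨y, rfl⟩, hy⟩ := exists_dist_lt_of_hausdorffDist_lt (mem_range_self x) hH hfin
    exact ⟨y, hy⟩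
  · obtain ⟨_, ⟨x, rfl⟩, hx⟩ := exists_dist_lt_of_hausdorffDist_lt' (mem_range_self y) hH hfin
    exact ⟨x, hx⟩
  · rw [← (isometry_optimalGHInjl X Y).dist_eq, ← (isometry_optimalGHInjr X Y).dist_eq]
    calc |dist (Φ x) (Φ x') - dist (Ψ y) (Ψ y')| ≤ dist (Φ x) (Ψ y) + dist (Φ x') (Ψ y') :=
          by simpa only [Real.dist_eq] using dist_dist_dist_le (Φ x) (Φ x') (Ψ y) (Ψ y')
      _ ≤ 2 * r := by linarith

theorem dist_toGHSpace_le_of_isCorrespondence {R : X → Y → Prop} {r : ℝ}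
    (hR : IsCorrespondence_s13 R (2 * r)) : dist (toGHSpace X) (toGHSpace Y) ≤ r := by
  obtain ⟨x₀⟩ := ‹Nonempty X›
  obtain ⟨y₀, hx₀y₀⟩ := hR.left_total x₀
  have hr : 0 ≤ r := by simpa using hR.abs_dist_sub_le hx₀y₀ hx₀y₀
  refine le_of_forall_pos_le_add fun η hη => ?_
  let Z := {p : X × Y // R p.1 p.2}
  have : Nonempty Z := ⟨⟨(x₀, y₀), hx₀y₀⟩⟩
  -- glue `X` and `Y` so that the pairs of `R` end up at distance `r + η`
  let : MetricSpace (X ⊕ Y) := glueMetricApprox (fun p : Z => p.1.1) (fun p : Z => p.1.2)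
    (r + η) (by linarith) fun p q => (hR.abs_dist_sub_le p.2 q.2).trans (by linarith)
  have hglued : ∀ x y, R x y → dist (Sum.inl x : X ⊕ Y) (Sum.inr y) = r + η := fun x y hxy =>
    glueDist_glued_points (fun p : Z => p.1.1) (fun p : Z => p.1.2) (r + η) ⟨(x, y), hxy⟩
  calc dist (toGHSpace X) (toGHSpace Y)
      ≤ hausdorffDist (range (Sum.inl : X → X ⊕ Y)) (range Sum.inr) :=
        ghDist_le_hausdorffDist (Isometry.of_dist_eq fun _ _ => rfl)
          (Isometry.of_dist_eq fun _ _ => rfl)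
    _ ≤ r + η := by
        refine hausdorffDist_le_of_mem_dist (by linarith) ?_ ?_
        · rintro _ ⟨x, rfl⟩
          obtain ⟨y, hxy⟩ := hR.left_total x
          exact ⟨_, mem_range_self y, (hglued x y hxy).le⟩
        · rintro _ ⟨y, rfl⟩
          obtain ⟨x, hxy⟩ := hR.right_total y
          exact ⟨_, mem_range_self x, by rw [dist_comm, hglued x y hxy]⟩

end Correspondence

structure IsGeneralPositionBound (M : Type*) [MetricSpace M] (c : ℝ) : Prop where
  pos : 0 < c
  le_dist : ∀ ⦃x y : M⦄, x ≠ y → c ≤ dist x y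
  le_abs_dist_sub_dist : ∀ ⦃x y z w : M⦄, x ≠ y → z ≠ w → ({x, y} : Set M) ≠ {z, w} →
    c ≤ |dist x y - dist z w|
  dist_add_le : ∀ ⦃x y z : M⦄, x ≠ y → y ≠ z → x ≠ z → dist x z + c ≤ dist x y + dist y z

theorem InGeneralPosition.eventually_isGeneralPositionBound {M : Type*} [MetricSpace M]
    [Finite M] (h : InGeneralPosition M) : ∀ᶠ c in 𝓝[>] 0, IsGeneralPositionBound M c := by
  have h₁ : ∀ᶠ c in 𝓝 (0 : ℝ), ∀ x y : M, x ≠ y → c ≤ dist x y :=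
    eventually_all.2 fun x => eventually_all.2 fun y => eventually_imp_distrib_left.2 fun hxy =>
      eventually_le_nhds (dist_pos.2 hxy)
  have h₂ : ∀ᶠ c in 𝓝 (0 : ℝ), ∀ x y z w : M, x ≠ y → z ≠ w → ({x, y} : Set M) ≠ {z, w} →
      c ≤ |dist x y - dist z w| :=
    eventually_all.2 fun x => eventually_all.2 fun y => eventually_all.2 fun z =>
      eventually_all.2 fun w => eventually_imp_distrib_left.2 fun hxy =>
      eventually_imp_distrib_left.2 fun hzw => eventually_imp_distrib_left.2 fun hne =>
      eventually_le_nhds (abs_pos.2 (sub_ne_zero.2 (h.1 x y z w hxy hzw hne)))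
  have h₃ : ∀ᶠ c in 𝓝 (0 : ℝ), ∀ x y z : M, x ≠ y → y ≠ z → x ≠ z →
      c ≤ dist x y + dist y z - dist x z :=
    eventually_all.2 fun x => eventually_all.2 fun y => eventually_all.2 fun z =>
      eventually_imp_distrib_left.2 fun hxy => eventually_imp_distrib_left.2 fun hyz =>
      eventually_imp_distrib_left.2 fun hxz =>
      eventually_le_nhds (sub_pos.2 (h.2 x y z hxy hyz hxz))
  filter_upwards [self_mem_nhdsWithin, nhdsWithin_le_nhds h₁, nhdsWithin_le_nhds h₂,
    nhdsWithin_le_nhds h₃] with c hc h₁ h₂ h₃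
  exact ⟨hc, fun x y => h₁ x y, fun x y z w => h₂ x y z w,
    fun x y z hxy hyz hxz => by linarith [h₃ x y z hxy hyz hxz]⟩

/-- `σ` maps every pair of points onto itself, and with three points each point is the only
common point of two pairs. -/
theorem IsGeneralPositionBound.eq_id_of_abs_dist_sub_lt {M : Type*} [MetricSpace M] [Fintype M]
    {c : ℝ} (hM : IsGeneralPositionBound M c) (h3 : 3 ≤ Fintype.card M) {σ : M → M}
    (hσ : ∀ m m', |dist m m' - dist (σ m) (σ m')| < c) : σ = id := by
  classical
  have hinj : ∀ ⦃m m'⦄, m ≠ m' → σ m ≠ σ m' := fun m m' hne heq => by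
    have := hσ m m'
    rw [heq, dist_self, sub_zero, abs_of_nonneg dist_nonneg] at this
    exact (hM.le_dist hne).not_gt this
  have hpair : ∀ ⦃m m'⦄, m ≠ m' → σ m ∈ ({m, m'} : Set M) := fun m m' hne => by
    by_contra hmem
    have hpair_ne : ({σ m, σ m'} : Set M) ≠ {m, m'} := fun heq => hmem (heq ▸ .inl rfl)
    have := hM.le_abs_dist_sub_dist (hinj hne) hne hpair_ne
    rw [abs_sub_comm] at this
    exact this.not_gt (hσ m m')
  funext m
  obtain ⟨m₁, hm₁⟩ := Fintype.exists_ne_of_one_lt_card (by omega) m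
  obtain ⟨m₂, hm₂, hm₁₂⟩ := Finset.exists_mem_ne (s := Finset.univ.erase m)
    (by rw [Finset.card_erase_of_mem (Finset.mem_univ m), Finset.card_univ]; omega) m₁
  have hm₂ : m₂ ≠ m := Finset.ne_of_mem_erase hm₂
  rcases hpair hm₁.symm with h | h₁
  · exact h
  rcases hpair hm₂.symm with h | h₂
  · exact h
  exact absurd (h₂.symm.trans h₁) hm₁₂

section Labeling

variable {X M : Type*} [PseudoMetricSpace X] [MetricSpace M]

structure IsLabeling (f : X → M) (b : ℝ) : Prop where
  surjective : Surjective f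
  abs_dist_sub_le : ∀ x y, |dist x y - dist (f x) (f y)| ≤ b

theorem isLabeling_id {b : ℝ} (hb : 0 ≤ b) : IsLabeling (id : M → M) b :=
  ⟨surjective_id, fun x y => by simpa using hb⟩

variable {f g : X → M} {b b' c : ℝ}

theorem IsLabeling.comp_isometryEquiv {Y : Type*} [PseudoMetricSpace Y] (hf : IsLabeling f b)
    (ψ : Y ≃ᵢ X) : IsLabeling (f ∘ ψ) b :=
  ⟨hf.surjective.comp ψ.surjective, fun x y => by
    simpa only [comp_apply, ψ.dist_eq] using hf.abs_dist_sub_le (ψ x) (ψ y)⟩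

theorem IsLabeling.dist_le_of_eq (hf : IsLabeling f b) {x y : X} (h : f x = f y) :
    dist x y ≤ b := by
  simpa [h] using hf.abs_dist_sub_le x y

theorem IsLabeling.eq_of_dist_lt (hM : IsGeneralPositionBound M c) (hf : IsLabeling f b)
    {x y : X} (h : dist x y < c - b) : f x = f y := by
  by_contra hne
  have := hf.abs_dist_sub_le x y
  linarith [hM.le_dist hne, (abs_le.1 this).1]

theorem IsCorrespondence_s13.exists_isLabeling {R : M → X → Prop} (hM : IsGeneralPositionBound M c)
    (hR : IsCorrespondence_s13 R b) (hb : b < c) : ∃ f : X → M, IsLabeling f b := by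
  choose f hf using hR.right_total
  refine ⟨f, fun m => ?_, fun x y => by rw [abs_sub_comm]; exact hR.abs_dist_sub_le (hf x) (hf y)⟩
  obtain ⟨x, hmx⟩ := hR.left_total m
  refine ⟨x, by_contra fun hne => ?_⟩
  have := hR.abs_dist_sub_le hmx (hf x)
  rw [dist_self, sub_zero, abs_of_nonneg dist_nonneg] at this
  linarith [hM.le_dist (Ne.symm hne)]

/-- `g` factors through `f` as `σ ∘ f` with `σ` an approximate self-isometry of `M`. -/
theorem IsLabeling.eq [Fintype M] (hM : IsGeneralPositionBound M c) (h3 : 3 ≤ Fintype.card M)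
    (hf : IsLabeling f b) (hg : IsLabeling g b') (hbb : b + b' < c) : f = g := by
  set s := surjInv hf.surjective
  have hfs : ∀ m, f (s m) = m := surjInv_eq hf.surjective
  have hσ : g ∘ s = id := hM.eq_id_of_abs_dist_sub_lt h3 fun m m' => by
    have h₁ := hf.abs_dist_sub_le (s m) (s m')
    have h₂ := hg.abs_dist_sub_le (s m) (s m')
    rw [hfs, hfs] at h₁
    calc |dist m m' - dist (g (s m)) (g (s m'))|
        ≤ |dist m m' - dist (s m) (s m')| + |dist (s m) (s m') - dist (g (s m)) (g (s m'))| :=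
          abs_sub_le _ _ _
      _ < c := by rw [abs_sub_comm] at h₁; linarith
  funext x
  have hfib : g (s (f x)) = g x :=
    hg.eq_of_dist_lt hM ((hf.dist_le_of_eq (hfs (f x))).trans_lt (by linarith))
  rw [← hfib]
  exact (congrFun hσ (f x)).symm

end Labeling

/-- Pulled back along `R`, `f` becomes a labeling of `Y`, which is `g` by uniqueness. -/
theorem IsCorrespondence_s13.apply_eq_apply_of_isLabeling {X Y M : Type*} [PseudoMetricSpace X]
    [PseudoMetricSpace Y] [MetricSpace M] [Fintype M] {R : X → Y → Prop} {f : X → M} {g : Y → M}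
    {r b b' c : ℝ} (hM : IsGeneralPositionBound M c) (h3 : 3 ≤ Fintype.card M)
    (hR : IsCorrespondence_s13 R r) (hf : IsLabeling f b) (hg : IsLabeling g b')
    (hr : r + b + b' < c) {x : X} {y : Y} (hxy : R x y) : f x = g y := by
  have hb' : 0 ≤ b' := by simpa using hg.abs_dist_sub_le y y
  choose x' hx' using hR.right_total
  have hclose : ∀ ⦃x y⦄, R x y → f (x' y) = f x := fun x y hxy => by
    refine hf.eq_of_dist_lt hM (lt_of_le_of_lt ?_ (by linarith : r < c - b))
    simpa using hR.abs_dist_sub_le (hx' y) hxy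
  have hlab : IsLabeling (f ∘ x') (r + b) := by
    refine ⟨fun m => ?_, fun y y' => ?_⟩
    · obtain ⟨x, rfl⟩ := hf.surjective m
      obtain ⟨y, hxy⟩ := hR.left_total x
      exact ⟨y, hclose hxy⟩
    · calc |dist y y' - dist (f (x' y)) (f (x' y'))|
          ≤ |dist y y' - dist (x' y) (x' y')|
            + |dist (x' y) (x' y') - dist (f (x' y)) (f (x' y'))| := abs_sub_le _ _ _
        _ ≤ r + b := by
          rw [abs_sub_comm]
          exact add_le_add (hR.abs_dist_sub_le (hx' y) (hx' y')) (hf.abs_dist_sub_le _ _)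
  rw [← hclose hxy]
  exact congrFun (hlab.eq hM h3 hg (by linarith)) y

theorem IsGeneralPositionBound.exists_isLabeling {M X : Type*} [MetricSpace M] [CompactSpace M]
    [Nonempty M] [MetricSpace X] [CompactSpace X] [Nonempty X] {c b : ℝ}
    (hM : IsGeneralPositionBound M c) (h : 2 * dist (toGHSpace M) (toGHSpace X) < b) (hb : b < c) :
    ∃ f : X → M, IsLabeling f b := by
  obtain ⟨R, hR⟩ := exists_isCorrespondence_of_dist_toGHSpace_lt (X := M) (Y := X)
    (r := b / 2) (by linarith)
  rw [mul_div_cancel₀ b two_ne_zero] at hR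
  exact hR.exists_isLabeling hM hb

theorem IsGeneralPositionBound.exists_isLabeling_of_mem_ball {M : Type*} [MetricSpace M]
    [CompactSpace M] [Nonempty M] {c : ℝ} (hM : IsGeneralPositionBound M c) {p : GHSpace}
    (hp : p ∈ ball (toGHSpace M) (c / 12)) : ∃ f : p.Rep → M, IsLabeling f (c / 3) := by
  refine hM.exists_isLabeling ?_ (by linarith [hM.pos])
  rw [p.toGHSpace_rep, dist_comm]
  linarith [mem_ball.1 hp, hM.pos]

section Shifted

def Shifted (X : Type*) {M N : Type*} (_e : M ≃ N) (_f : X → M) : Type _ := X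

instance {X M N : Type*} {e : M ≃ N} {f : X → M} [Nonempty X] : Nonempty (Shifted X e f) :=
  ‹Nonempty X›

variable {X M N : Type*} [PseudoMetricSpace X] [MetricSpace M] [MetricSpace N] (e : M ≃ N)
  {f : X → M} {b c : ℝ}

def shiftedDist (f : X → M) (x y : X) : ℝ :=
  dist x y + dist (e (f x)) (e (f y)) - dist (f x) (f y)

theorem shiftedDist_of_apply_eq {x y : X} (h : f x = f y) : shiftedDist e f x y = dist x y := by
  simp [shiftedDist, h]

theorem shiftedDist_sub_shiftedDist {Y : Type*} [PseudoMetricSpace Y] {g : Y → M} {x x' : X}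
    {y y' : Y} (h : f x = g y) (h' : f x' = g y') :
    shiftedDist e f x x' - shiftedDist e g y y' = dist x x' - dist y y' := by
  simp only [shiftedDist, h, h']
  ring

theorem IsLabeling.abs_shiftedDist_sub_le (hf : IsLabeling f b) (x y : X) :
    |shiftedDist e f x y - dist (e (f x)) (e (f y))| ≤ b := by
  simpa only [shiftedDist, add_sub_cancel_right, sub_sub_sub_cancel_right, add_sub_right_comm]
    using hf.abs_dist_sub_le x y

theorem IsLabeling.shiftedDist_triangle (hN : IsGeneralPositionBound N c) (hf : IsLabeling f b)
    (hb : b ≤ c / 3) (x y z : X) :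
    shiftedDist e f x z ≤ shiftedDist e f x y + shiftedDist e f y z := by
  have hlab := hf.abs_shiftedDist_sub_le e
  by_cases hxy : f x = f y
  · simp only [shiftedDist, hxy, dist_self]
    linarith [dist_triangle x y z]
  by_cases hyz : f y = f z
  · simp only [shiftedDist, hyz, dist_self]
    linarith [dist_triangle x y z]
  have hexy := hN.le_dist (e.injective.ne hxy)
  have heyz := hN.le_dist (e.injective.ne hyz)
  have h₁ := abs_le.1 (hlab x y)
  have h₂ := abs_le.1 (hlab y z)
  by_cases hxz : f x = f z
  · rw [shiftedDist_of_apply_eq e hxz]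
    linarith [hf.dist_le_of_eq hxz, hN.pos]
  · have h₃ := abs_le.1 (hlab x z)
    linarith [hN.dist_add_le (e.injective.ne hxy) (e.injective.ne hyz) (e.injective.ne hxz)]

theorem IsLabeling.shiftedDist_pos (hN : IsGeneralPositionBound N c) (hf : IsLabeling f b)
    (hb : b ≤ c / 3) {x y : X} (h : f x ≠ f y) : 0 < shiftedDist e f x y := by
  have hexy := e.injective.ne h
  linarith [(abs_le.1 (hf.abs_shiftedDist_sub_le e x y)).1, hN.le_dist hexy, dist_pos.2 hexy]

end Shifted

section ShiftedMetric

variable {X M N : Type*} [MetricSpace X] [MetricSpace M] [MetricSpace N] (e : M ≃ N) {f : X → M}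
  {b c : ℝ}

abbrev Shifted.metricSpace (hN : IsGeneralPositionBound N c) (hf : IsLabeling f b)
    (hb : b ≤ c / 3) : MetricSpace (Shifted X e f) where
  dist := shiftedDist (X := X) e f
  dist_self (x : X) := by simp [shiftedDist]
  dist_comm (x y : X) := by simp only [shiftedDist, dist_comm]
  dist_triangle (x y z : X) := hf.shiftedDist_triangle e hN hb x y z
  eq_of_dist_eq_zero {x y : X} h := by
    by_cases hxy : f x = f y
    · exact (dist_eq_zero (γ := X)).1 ((shiftedDist_of_apply_eq e hxy).symm.trans h)
    · exact absurd h (hf.shiftedDist_pos e hN hb hxy).ne'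

theorem Shifted.compactSpace [CompactSpace X] (hM : IsGeneralPositionBound M c)
    (hN : IsGeneralPositionBound N c) (hf : IsLabeling f b) (hb : b ≤ c / 3) :
    letI := Shifted.metricSpace e hN hf hb
    CompactSpace (Shifted X e f) := by
  let := Shifted.metricSpace e hN hf hb
  have hcb : 0 < c - b := by linarith [hN.pos]
  have hcont : Continuous (X := X) (Y := Shifted X e f) id :=
    Metric.continuous_iff.2 fun x ε hε => ⟨min ε (c - b), lt_min hε hcb, fun y hy => by
      have hfyx := hf.eq_of_dist_lt hM (hy.trans_le (min_le_right _ _))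
      exact (shiftedDist_of_apply_eq e hfyx).trans_lt (hy.trans_le (min_le_left _ _))⟩
  exact Surjective.compactSpace hcont surjective_id

theorem IsLabeling.shifted (hN : IsGeneralPositionBound N c) (hf : IsLabeling f b)
    (hb : b ≤ c / 3) :
    letI := Shifted.metricSpace e hN hf hb
    IsLabeling (X := Shifted X e f) (e ∘ f) b := by
  let := Shifted.metricSpace e hN hf hb
  exact ⟨e.surjective.comp hf.surjective, fun (x y : X) => hf.abs_shiftedDist_sub_le e x y⟩

end ShiftedMetric

section Transfer

variable {M N : Type*} [MetricSpace M] [MetricSpace N] (e : M ≃ N) {c : ℝ}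
  (hM : IsGeneralPositionBound M c) (hN : IsGeneralPositionBound N c)

def shiftedGH {X : Type*} [MetricSpace X] [CompactSpace X] [Nonempty X] {f : X → M}
    (hf : IsLabeling f (c / 3)) : GHSpace :=
  letI := Shifted.metricSpace e hN hf le_rfl
  haveI := Shifted.compactSpace e hM hN hf le_rfl
  toGHSpace (Shifted X e f)

theorem dist_shiftedGH_le [Fintype M] (h3 : 3 ≤ Fintype.card M) {X Y : Type*} [MetricSpace X]
    [CompactSpace X] [Nonempty X] [MetricSpace Y] [CompactSpace Y] [Nonempty Y] {f : X → M}
    {g : Y → M} (hf : IsLabeling f (c / 3)) (hg : IsLabeling g (c / 3))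
    (hd : dist (toGHSpace X) (toGHSpace Y) < c / 6) :
    dist (shiftedGH e hM hN hf) (shiftedGH e hM hN hg) ≤ dist (toGHSpace X) (toGHSpace Y) := by
  refine ge_of_tendsto (x := 𝓝[>] dist (toGHSpace X) (toGHSpace Y))
    (tendsto_nhdsWithin_of_tendsto_nhds tendsto_id) ?_
  filter_upwards [self_mem_nhdsWithin, nhdsWithin_le_nhds (eventually_lt_nhds hd)]
    with r (hr : _ < r) hrc
  obtain ⟨R, hR⟩ := exists_isCorrespondence_of_dist_toGHSpace_lt hr
  have hfg : ∀ ⦃x y⦄, R x y → f x = g y := fun x y hxy =>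
    hR.apply_eq_apply_of_isLabeling hM h3 hf hg (by linarith) hxy
  let := Shifted.metricSpace e hN hf le_rfl
  let := Shifted.metricSpace e hN hg le_rfl
  have := Shifted.compactSpace e hM hN hf le_rfl
  have := Shifted.compactSpace e hM hN hg le_rfl
  refine dist_toGHSpace_le_of_isCorrespondence (X := Shifted X e f) (Y := Shifted Y e g) (R := R)
    ⟨hR.left_total, hR.right_total, fun x y x' y' hxy hxy' => ?_⟩
  show |shiftedDist e f x x' - shiftedDist e g y y'| ≤ 2 * r
  rw [shiftedDist_sub_shiftedDist e (hfg hxy) (hfg hxy')]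
  exact hR.abs_dist_sub_le hxy hxy'

open Classical in
/-- Only meaningful on spaces labelled by `M`, such as those near `M`; elsewhere an arbitrary
choice. -/
def transfer (p : GHSpace) : GHSpace :=
  if h : ∃ f : p.Rep → M, IsLabeling f (c / 3) then shiftedGH e hM hN h.choose_spec else p

theorem transfer_toGHSpace [Fintype M] (h3 : 3 ≤ Fintype.card M) {X : Type*} [MetricSpace X]
    [CompactSpace X] [Nonempty X] {f : X → M} (hf : IsLabeling f (c / 3)) :
    transfer e hM hN (toGHSpace X) = shiftedGH e hM hN hf := by
  obtain ⟨ψ⟩ := toGHSpace_eq_toGHSpace_iff_isometryEquiv.1 (toGHSpace X).toGHSpace_rep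
  have hex : ∃ g : (toGHSpace X).Rep → M, IsLabeling g (c / 3) :=
    ⟨f ∘ ψ, hf.comp_isometryEquiv ψ⟩
  rw [transfer, dif_pos hex]
  -- the labeling chosen for the representative need not be `f ∘ ψ`, but it gives the same space
  refine dist_le_zero.1 ((dist_shiftedGH_le e hM hN h3 hex.choose_spec hf ?_).trans_eq ?_) <;>
    rw [GHSpace.toGHSpace_rep, dist_self]
  linarith [hM.pos]

theorem transfer_toGHSpace_self [Fintype M] [Nonempty M] (h3 : 3 ≤ Fintype.card M) [Finite N]
    [Nonempty N] : transfer e hM hN (toGHSpace M) = toGHSpace N := by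
  have hid : IsLabeling (id : M → M) (c / 3) := isLabeling_id (by linarith [hM.pos])
  rw [transfer_toGHSpace e hM hN h3 hid]
  let := Shifted.metricSpace e hN hid le_rfl
  have := Shifted.compactSpace e hM hN hid le_rfl
  refine toGHSpace_eq_toGHSpace_iff_isometryEquiv.2
    ⟨{ toEquiv := e, isometry_toFun := Isometry.of_dist_eq fun (m m' : M) => ?_ }⟩
  show dist (e m) (e m') = shiftedDist e id m m'
  simp [shiftedDist]

theorem transfer_symm_transfer_toGHSpace [Fintype M] (h3 : 3 ≤ Fintype.card M) [Fintype N]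
    (h3N : 3 ≤ Fintype.card N) {X : Type*} [MetricSpace X] [CompactSpace X] [Nonempty X]
    {f : X → M} (hf : IsLabeling f (c / 3)) :
    transfer e.symm hN hM (transfer e hM hN (toGHSpace X)) = toGHSpace X := by
  let := Shifted.metricSpace e hN hf le_rfl
  have := Shifted.compactSpace e hM hN hf le_rfl
  have hlab := hf.shifted e hN le_rfl
  rw [transfer_toGHSpace e hM hN h3 hf]
  refine (transfer_toGHSpace e.symm hN hM h3N hlab).trans ?_
  let := Shifted.metricSpace e.symm hM hlab le_rfl
  have := Shifted.compactSpace e.symm hN hM hlab le_rfl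
  refine toGHSpace_eq_toGHSpace_iff_isometryEquiv.2
    ⟨{ toEquiv := Equiv.refl X, isometry_toFun := Isometry.of_dist_eq fun x y => ?_ }⟩
  change @dist X _ x y = shiftedDist e f x y + dist (e.symm (e (f x))) (e.symm (e (f y)))
    - dist (e (f x)) (e (f y))
  simp only [shiftedDist, Equiv.symm_apply_apply]
  ring

theorem dist_transfer_le [Fintype M] [Nonempty M] (h3 : 3 ≤ Fintype.card M) {p q : GHSpace}
    (hp : p ∈ ball (toGHSpace M) (c / 12)) (hq : q ∈ ball (toGHSpace M) (c / 12)) :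
    dist (transfer e hM hN p) (transfer e hM hN q) ≤ dist p q := by
  obtain ⟨f, hf⟩ := hM.exists_isLabeling_of_mem_ball hp
  obtain ⟨g, hg⟩ := hM.exists_isLabeling_of_mem_ball hq
  have hpq : dist p q < c / 6 := by
    linarith [dist_triangle_right p q (toGHSpace M), mem_ball.1 hp, mem_ball.1 hq]
  rw [← p.toGHSpace_rep, ← q.toGHSpace_rep] at hpq ⊢
  rw [transfer_toGHSpace e hM hN h3 hf, transfer_toGHSpace e hM hN h3 hg]
  exact dist_shiftedGH_le e hM hN h3 hf hg hpq

theorem transfer_mapsTo [Fintype M] [Nonempty M] [Finite N] [Nonempty N] (h3 : 3 ≤ Fintype.card M) :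
    MapsTo (transfer e hM hN) (ball (toGHSpace M) (c / 12)) (ball (toGHSpace N) (c / 12)) :=
  fun p hp => by
  rw [mem_ball, ← transfer_toGHSpace_self e hM hN h3]
  exact (dist_transfer_le e hM hN h3 hp (mem_ball_self (by linarith [hM.pos]))).trans_lt hp

theorem transfer_leftInvOn [Fintype M] [Nonempty M] [Fintype N] (h3 : 3 ≤ Fintype.card M)
    (h3N : 3 ≤ Fintype.card N) :
    LeftInvOn (transfer e.symm hN hM) (transfer e hM hN) (ball (toGHSpace M) (c / 12)) :=
  fun p hp => by
  obtain ⟨f, hf⟩ := hM.exists_isLabeling_of_mem_ball hp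
  rw [← p.toGHSpace_rep]
  exact transfer_symm_transfer_toGHSpace e hM hN h3 h3N hf

end Transfer

end

/-- for any two finite metric spaces `M`, `N` in general position with
the same number `n ≥ 3` of points, there is an `ε > 0` such that the open balls
`U_ε(M)` and `U_ε(N)` in the Gromov--Hausdorff space are isometric. -/
theorem stmt_13 (M N : Type) [MetricSpace M] [Fintype M] [Nonempty M]
    [MetricSpace N] [Fintype N] [Nonempty N]
    (hcard : Fintype.card M = Fintype.card N) (h3 : 3 ≤ Fintype.card M)
    (hGPM : InGeneralPosition M) (hGPN : InGeneralPosition N) :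
    ∃ ε : ℝ, 0 < ε ∧
      Nonempty ((Metric.ball (GromovHausdorff.toGHSpace M) ε) ≃ᵢ
        (Metric.ball (GromovHausdorff.toGHSpace N) ε)) := by
  obtain ⟨c, hM, hN⟩ :=
    (hGPM.eventually_isGeneralPositionBound.and hGPN.eventually_isGeneralPositionBound).exists
  have h3N : 3 ≤ Fintype.card N := hcard ▸ h3
  let e := Fintype.equivOfCardEq hcard
  refine ⟨c / 12, by linarith [hM.pos], ?_⟩
  exact Set.InvOn.nonempty_isometryEquiv
    ⟨transfer_leftInvOn e hM hN h3 h3N, transfer_leftInvOn e.symm hN hM h3N h3⟩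
    (transfer_mapsTo e hM hN h3) (transfer_mapsTo e.symm hN hM h3N)
    (fun _ hp _ hq => dist_transfer_le e hM hN h3 hp hq)
    (fun _ hp _ hq => dist_transfer_le e.symm hN hM h3N hp hq)
end

section
/- Let M = {1,…,n}, n ≥ 3, be a finite metric space in general position. Then for all sufficiently small ε > 0, the isometry group of the open ball U_ε(M) in the Gromov–Hausdorff space contains a subgroup isomorphic to the symmetric group Sₙ: the map sending a permutation τ ∈ Sₙ to the isometry D_{M,M^τ,ε} of U_ε(M) is an injective group homomorphism. -/
noncomputable section

open GromovHausdorff Metric Set Function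

namespace GHBallSymmetry

variable {M : Type*}

theorem exists_pos_le_of_finite {ι : Type*} [Finite ι] [Nonempty ι] {P : ι → Prop} {g : ι → ℝ}
    (h : ∀ i, P i → 0 < g i) : ∃ c, 0 < c ∧ ∀ i, P i → c ≤ g i := by
  classical
  obtain ⟨i₀, hi₀⟩ := Finite.exists_min fun i => if P i then g i else 1
  refine ⟨_, ?_, fun i hi => (hi₀ i).trans_eq (if_pos hi)⟩
  split_ifs with hP
  exacts [h i₀ hP, one_pos]

theorem eq_id_of_forall_pair_eq (h3 : 3 ≤ Cardinal.mk M) {φ : M → M}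
    (h : ∀ a b, a ≠ b → ({φ a, φ b} : Set M) = {a, b}) : φ = id := by
  funext a
  obtain ⟨b, hba, -⟩ := Cardinal.exists_ne_ne_of_three_le h3 a a
  obtain ⟨b', hb'a, hb'b⟩ := Cardinal.exists_ne_ne_of_three_le h3 a b
  have hb : φ a ∈ ({a, b} : Set M) := h a b hba.symm ▸ mem_insert _ _
  have hb' : φ a ∈ ({a, b'} : Set M) := h a b' hb'a.symm ▸ mem_insert _ _
  simp only [mem_insert_iff, mem_singleton_iff] at hb hb'
  rcases hb with hb | hb
  · exact hb
  · exact hb'.resolve_right fun h' => hb'b (h'.symm.trans hb)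

section Gap

variable [MetricSpace M] {c : ℝ}

/-- General position of `M` with margin `c`. -/
structure IsGap (M : Type*) [MetricSpace M] (c : ℝ) : Prop where
  pos : 0 < c
  le_dist : ∀ a b : M, a ≠ b → c ≤ dist a b
  triangle : ∀ a b d : M, a ≠ b → b ≠ d → a ≠ d → dist a d + c ≤ dist a b + dist b d
  le_abs_dist_sub : ∀ a b a' b' : M, a ≠ b → a' ≠ b' → ({a, b} : Set M) ≠ {a', b'} →
    c ≤ |dist a b - dist a' b'|

theorem _root_.InGeneralPosition.exists_isGap [Finite M] [Nonempty M]
    (hM : InGeneralPosition M) : ∃ c, IsGap M c := by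
  obtain ⟨c₁, hc₁, h₁⟩ := exists_pos_le_of_finite (P := fun p : M × M => p.1 ≠ p.2)
    (g := fun p => dist p.1 p.2) fun p hp => dist_pos.2 hp
  obtain ⟨c₂, hc₂, h₂⟩ := exists_pos_le_of_finite
    (P := fun t : M × M × M => t.1 ≠ t.2.1 ∧ t.2.1 ≠ t.2.2 ∧ t.1 ≠ t.2.2)
    (g := fun t => dist t.1 t.2.1 + dist t.2.1 t.2.2 - dist t.1 t.2.2)
    fun t ht => sub_pos.2 (hM.2 _ _ _ ht.1 ht.2.1 ht.2.2)
  obtain ⟨c₃, hc₃, h₃⟩ := exists_pos_le_of_finite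
    (P := fun q : (M × M) × M × M =>
      q.1.1 ≠ q.1.2 ∧ q.2.1 ≠ q.2.2 ∧ ({q.1.1, q.1.2} : Set M) ≠ {q.2.1, q.2.2})
    (g := fun q => |dist q.1.1 q.1.2 - dist q.2.1 q.2.2|)
    fun q hq => abs_pos.2 (sub_ne_zero.2 (hM.1 _ _ _ _ hq.1 hq.2.1 hq.2.2))
  refine ⟨min c₁ (min c₂ c₃), by positivity, fun a b hab => ?_, fun a b d hab hbd had => ?_,
    fun a b a' b' hab ha'b' hne => ?_⟩
  · exact (min_le_left _ _).trans (h₁ (a, b) hab)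
  · have := h₂ (a, b, d) ⟨hab, hbd, had⟩
    have := min_le_right c₁ (min c₂ c₃)
    have := min_le_left c₂ c₃
    dsimp only at *
    linarith
  · exact ((min_le_right _ _).trans (min_le_right _ _)).trans
      (h₃ ((a, b), (a', b')) ⟨hab, ha'b', hne⟩)

theorem IsGap.pair_eq_of_abs_sub_lt (hC : IsGap M c) {a b a' b' : M} (hab : a ≠ b)
    (h : |dist a b - dist a' b'| < c) : ({a, b} : Set M) = {a', b'} := by
  have ha'b' : a' ≠ b' := by
    rintro rfl
    rw [dist_self, sub_zero, abs_of_nonneg dist_nonneg] at h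
    exact (hC.le_dist a b hab).not_gt h
  by_contra hne
  exact (hC.le_abs_dist_sub a b a' b' hab ha'b' hne).not_gt h

theorem IsGap.dist_eq_of_abs_sub_lt (hC : IsGap M c) {a b a' b' : M}
    (h : |dist a b - dist a' b'| < c) : dist a b = dist a' b' := by
  by_cases hab : a = b
  · subst hab
    by_contra hne
    rw [dist_self, zero_sub, abs_neg, abs_of_nonneg dist_nonneg] at h
    exact (hC.le_dist a' b' fun h' => hne (by rw [h', dist_self, dist_self])).not_gt h
  rcases pair_eq_pair_iff.1 (hC.pair_eq_of_abs_sub_lt hab h) with ⟨rfl, rfl⟩ | ⟨rfl, rfl⟩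
  exacts [rfl, dist_comm _ _]

theorem IsGap.eq_id_of_dist_eq (hC : IsGap M c) (h3 : 3 ≤ Cardinal.mk M) {φ : M → M}
    (h : ∀ a b, dist (φ a) (φ b) = dist a b) : φ = id :=
  eq_id_of_forall_pair_eq h3 fun a b hab =>
    hC.pair_eq_of_abs_sub_lt (fun h' => hab (dist_eq_zero.1 (by rw [← h, h', dist_self])))
      (by rw [h, sub_self, abs_zero]; exact hC.pos)

end Gap

section Labeling

variable [MetricSpace M] {X : Type*} [Dist X] {c k k' : ℝ}

def DistortionLE (f : X → M) (k : ℝ) : Prop :=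
  ∀ x y, |dist x y - dist (f x) (f y)| ≤ k

structure IsLabeling (f : X → M) (k : ℝ) : Prop where
  surjective : Surjective f
  distortionLE : DistortionLE f k

theorem DistortionLE.mono {f : X → M} (hf : DistortionLE f k) (h : k ≤ k') :
    DistortionLE f k' :=
  fun x y => (hf x y).trans h

theorem DistortionLE.comp {Y : Type*} [MetricSpace Y] {f : Y → M} {φ : X → Y}
    (hf : DistortionLE f k) (hφ : DistortionLE φ k') : DistortionLE (f ∘ φ) (k' + k) :=
  fun x x' => (abs_sub_le _ (dist (φ x) (φ x')) _).trans (add_le_add (hφ x x') (hf _ _))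

theorem DistortionLE.eq_of_dist_lt (hC : IsGap M c) {f : X → M} (hf : DistortionLE f k)
    {x y : X} (h : dist x y < c - k) : f x = f y := by
  by_contra hne
  have := hC.le_dist _ _ hne
  have := (abs_le.1 (hf x y)).1
  linarith

theorem DistortionLE.dist_eq (hC : IsGap M c) {f f' : X → M} (hf : DistortionLE f k)
    (hf' : DistortionLE f' k') (hk : k + k' < c) (x y : X) :
    dist (f x) (f y) = dist (f' x) (f' y) :=
  hC.dist_eq_of_abs_sub_lt <| by
    have := abs_le.1 (hf x y)
    have := abs_le.1 (hf' x y)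
    rw [abs_lt]
    constructor <;> linarith

theorem DistortionLE.eq_of_surjective (hC : IsGap M c) (h3 : 3 ≤ Cardinal.mk M)
    {f f' : X → M} (hf : DistortionLE f k) (hf' : DistortionLE f' k') (hk : k + k' < c)
    (hfs : Surjective f) : f = f' := by
  have E := hf.dist_eq hC hf' hk
  choose s hs using hfs
  have hf'_eq : ∀ x, f' x = f' (s (f x)) := fun x =>
    dist_eq_zero.1 (by rw [← E, hs, dist_self])
  have hφ : (fun a => f' (s a)) = id :=
    hC.eq_id_of_dist_eq h3 fun a b => by rw [← E, hs, hs]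
  funext x
  rw [hf'_eq x]
  exact (congrFun hφ (f x)).symm

end Labeling

section Twist

variable {X : Type*} {c k : ℝ} {f : X → M}

/-- `X` with the distance `d(x, y) + |τ (f x), τ (f y)| - |f x, f y|` when `f` is twistable, and
with its own distance otherwise. -/
def Twist (X : Type*) (_τ : Equiv.Perm M) (_f : X → M) : Type _ := X

def toTwist (τ : Equiv.Perm M) (f : X → M) : X ≃ Twist X τ f := Equiv.refl X

def Twist.label (τ : Equiv.Perm M) (f : X → M) : Twist X τ f → M := fun x => τ (f x)

@[simp]
theorem Twist.label_toTwist (τ : Equiv.Perm M) (f : X → M) (x : X) :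
    Twist.label τ f (toTwist τ f x) = τ (f x) := rfl

variable [MetricSpace M]

def twistDist [Dist X] (τ : Equiv.Perm M) (f : X → M) (x y : X) : ℝ :=
  dist x y + (dist (τ (f x)) (τ (f y)) - dist (f x) (f y))

theorem abs_twistDist_sub_le [Dist X] (hf : DistortionLE f k) (τ : Equiv.Perm M) (x y : X) :
    |twistDist τ f x y - dist (τ (f x)) (τ (f y))| ≤ k := by
  convert hf x y using 2
  unfold twistDist
  ring

theorem twistDist_triangle [PseudoMetricSpace X] (hC : IsGap M c) (hf : DistortionLE f k)
    (hk : 3 * k ≤ c) (τ : Equiv.Perm M) (x y z : X) :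
    twistDist τ f x z ≤ twistDist τ f x y + twistDist τ f y z := by
  have hxyz := dist_triangle x y z
  by_cases hxy : f x = f y
  · simp only [twistDist, hxy, dist_self, sub_self, add_zero]
    linarith
  by_cases hyz : f y = f z
  · simp only [twistDist, ← hyz, dist_self, sub_self, add_zero]
    linarith
  have hτxy : τ (f x) ≠ τ (f y) := τ.injective.ne hxy
  have hτyz : τ (f y) ≠ τ (f z) := τ.injective.ne hyz
  have h₁ := abs_le.1 (abs_twistDist_sub_le hf τ x y)
  have h₂ := abs_le.1 (abs_twistDist_sub_le hf τ y z)
  have h₃ := abs_le.1 (abs_twistDist_sub_le hf τ x z)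
  have := hC.le_dist _ _ hτxy
  have := hC.le_dist _ _ hτyz
  by_cases hxz : f x = f z
  · rw [hxz, dist_self] at h₃
    linarith
  have := hC.triangle _ _ _ hτxy hτyz (τ.injective.ne hxz)
  linarith

/-- The bound `c / 3` is what the triangle inequality for `twistDist` needs. -/
def IsTwistable [Dist X] (f : X → M) : Prop :=
  ∃ c, IsGap M c ∧ DistortionLE f (c / 3)

abbrev twistMetricSpace [MetricSpace X] (hf : IsTwistable f) (τ : Equiv.Perm M) :
    MetricSpace X where
  dist := twistDist τ f
  dist_self x := by simp [twistDist]
  dist_comm x y := by simp only [twistDist, dist_comm]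
  dist_triangle := by
    obtain ⟨c, hC, hfc⟩ := hf
    exact twistDist_triangle hC hfc (by linarith) τ
  eq_of_dist_eq_zero {x y} h := by
    obtain ⟨c, hC, hfc⟩ := hf
    by_cases hxy : f x = f y
    · simpa [twistDist, hxy] using h
    · have := hC.le_dist _ _ (τ.injective.ne hxy)
      have := (abs_le.1 (abs_twistDist_sub_le hfc τ x y)).1
      have := hC.pos
      change twistDist τ f x y = 0 at h
      linarith

open Classical in
instance Twist.instMetricSpace [MetricSpace X] (τ : Equiv.Perm M) (f : X → M) :
    MetricSpace (Twist X τ f) :=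
  show MetricSpace X from if hf : IsTwistable f then twistMetricSpace hf τ else ‹MetricSpace X›

variable [MetricSpace X] {τ : Equiv.Perm M}

theorem dist_toTwist (hf : IsTwistable f) (x y : X) :
    dist (toTwist τ f x) (toTwist τ f y) =
      dist x y + (dist (τ (f x)) (τ (f y)) - dist (f x) (f y)) := by
  have h : Twist.instMetricSpace τ f = twistMetricSpace hf τ := dif_pos hf
  change (Twist.instMetricSpace τ f).dist x y = _
  rw [h]
  rfl

theorem dist_toTwist_of_not (hf : ¬IsTwistable f) (x y : X) :
    dist (toTwist τ f x) (toTwist τ f y) = dist x y := by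
  have h : Twist.instMetricSpace τ f = ‹MetricSpace X› := dif_neg hf
  change (Twist.instMetricSpace τ f).dist x y = _
  rw [h]
  rfl

theorem dist_toTwist_of_eq (hf : IsTwistable f) {x y : X} (h : f x = f y) :
    dist (toTwist τ f x) (toTwist τ f y) = dist x y := by
  simp [dist_toTwist hf, h]

theorem uniformContinuous_toTwist (τ : Equiv.Perm M) (f : X → M) :
    UniformContinuous (toTwist τ f) := by
  obtain ⟨r, hr, hloc⟩ : ∃ r > 0, ∀ x y : X, dist x y < r →
      dist (toTwist τ f x) (toTwist τ f y) = dist x y := by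
    by_cases hf : IsTwistable f
    · obtain ⟨c, hC, hfc⟩ := hf
      exact ⟨c - c / 3, by linarith [hC.pos], fun x y hxy =>
        dist_toTwist_of_eq ⟨c, hC, hfc⟩ (hfc.eq_of_dist_lt hC hxy)⟩
    · exact ⟨1, one_pos, fun x y _ => dist_toTwist_of_not hf x y⟩
  refine Metric.uniformContinuous_iff.2 fun ε hε => ⟨min ε r, lt_min hε hr, fun {x y} hxy => ?_⟩
  rw [hloc x y (hxy.trans_le (min_le_right _ _))]
  exact hxy.trans_le (min_le_left _ _)

instance [CompactSpace X] (τ : Equiv.Perm M) (f : X → M) : CompactSpace (Twist X τ f) :=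
  (toTwist τ f).surjective.compactSpace (uniformContinuous_toTwist τ f).continuous

instance [Nonempty X] (τ : Equiv.Perm M) (f : X → M) : Nonempty (Twist X τ f) := ‹Nonempty X›

theorem DistortionLE.twist (hf : DistortionLE f k) (hf' : IsTwistable f) (τ : Equiv.Perm M) :
    DistortionLE (Twist.label τ f) k :=
  (toTwist τ f).surjective.forall₂.2 fun x y => by
    convert hf x y using 2
    rw [dist_toTwist hf', Twist.label_toTwist, Twist.label_toTwist]
    ring

theorem IsTwistable.twist (hf : IsTwistable f) (τ : Equiv.Perm M) :
    IsTwistable (Twist.label τ f) :=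
  let ⟨c, hC, hfc⟩ := hf
  ⟨c, hC, hfc.twist hf τ⟩

theorem IsLabeling.twist (hf : IsLabeling f k) (hf' : IsTwistable f) (τ : Equiv.Perm M) :
    IsLabeling (Twist.label τ f) k :=
  ⟨τ.surjective.comp hf.surjective, hf.distortionLE.twist hf' τ⟩

theorem IsTwistable.comp_isometry {Y : Type*} [MetricSpace Y] {g : Y → X} (hg : Isometry g)
    (hf : IsTwistable f) : IsTwistable (f ∘ g) :=
  let ⟨c, hC, hfc⟩ := hf
  ⟨c, hC, fun x y => by simpa only [comp_apply, hg.dist_eq] using hfc (g x) (g y)⟩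

theorem isometry_toTwist_comp {Y : Type*} [MetricSpace Y] {g : Y → X} (hg : Isometry g)
    (hf : IsTwistable f) (τ : Equiv.Perm M) :
    Isometry (toTwist τ f ∘ g ∘ (toTwist τ (f ∘ g)).symm) :=
  Isometry.of_dist_eq <| (toTwist τ (f ∘ g)).surjective.forall₂.2 fun x y => by
    simp [dist_toTwist hf, dist_toTwist (hf.comp_isometry hg), hg.dist_eq]

def twistTwistIso (hf : IsTwistable f) (σ τ : Equiv.Perm M) :
    Twist (Twist X τ f) σ (Twist.label τ f) ≃ᵢ Twist X (σ * τ) f where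
  toEquiv := ((toTwist τ f).trans (toTwist σ _)).symm.trans (toTwist (σ * τ) f)
  isometry_toFun := Isometry.of_dist_eq <|
    ((toTwist τ f).trans (toTwist σ _)).surjective.forall₂.2 fun x y => by
      simp only [Equiv.toFun_as_coe, Equiv.trans_apply, Equiv.symm_trans_apply,
        Equiv.symm_apply_apply, dist_toTwist hf, dist_toTwist (hf.twist τ), Twist.label_toTwist,
        Equiv.Perm.mul_apply]
      ring

def twistOneIso (hf : IsTwistable f) : Twist X 1 f ≃ᵢ X where
  toEquiv := (toTwist 1 f).symm
  isometry_toFun := Isometry.of_dist_eq <| (toTwist 1 f).surjective.forall₂.2 fun x y => by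
    simp [dist_toTwist hf]

def twistCongrIso {Y : Type*} [MetricSpace Y] (Φ : Y ≃ᵢ X) (hf : IsTwistable f)
    (τ : Equiv.Perm M) : Twist Y τ (f ∘ Φ) ≃ᵢ Twist X τ f where
  toEquiv := ((toTwist τ (f ∘ Φ)).symm.trans Φ.toEquiv).trans (toTwist τ f)
  isometry_toFun := Isometry.of_dist_eq <| (toTwist τ (f ∘ Φ)).surjective.forall₂.2 fun x y => by
    simp [dist_toTwist hf, dist_toTwist (hf.comp_isometry Φ.isometry), Φ.dist_eq]

def twistSelfIso (hC : IsGap M c) (τ : Equiv.Perm M) : M ≃ᵢ Twist M τ id where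
  toEquiv := (τ⁻¹ : Equiv.Perm M).trans (toTwist τ id)
  isometry_toFun := Isometry.of_dist_eq fun x y => by
    have hid : IsTwistable (id : M → M) :=
      ⟨c, hC, fun x y => by simp only [id, sub_self, abs_zero]; linarith [hC.pos]⟩
    simp [dist_toTwist hid]

variable [CompactSpace X] [Nonempty X]

theorem toGHSpace_twist_twist (hf : IsTwistable f) (σ τ : Equiv.Perm M) :
    toGHSpace (Twist (Twist X τ f) σ (Twist.label τ f)) = toGHSpace (Twist X (σ * τ) f) :=
  toGHSpace_eq_toGHSpace_iff_isometryEquiv.2 ⟨twistTwistIso hf σ τ⟩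

theorem toGHSpace_twist_one (hf : IsTwistable f) : toGHSpace (Twist X 1 f) = toGHSpace X :=
  toGHSpace_eq_toGHSpace_iff_isometryEquiv.2 ⟨twistOneIso hf⟩

end Twist

section Coupling

variable {X Y : Type*} [MetricSpace X] [MetricSpace Y]

theorem DistortionLE.of_near {Z : Type*} [PseudoMetricSpace Z] {l : X → Z} {r : Y → Z}
    (hl : Isometry l) (hr : Isometry r) {φ : X → Y} {ρ : ℝ}
    (h : ∀ x, dist (l x) (r (φ x)) ≤ ρ) : DistortionLE φ (2 * ρ) := fun x x' => by
  rw [← hl.dist_eq, ← hr.dist_eq, ← Real.dist_eq]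
  linarith [dist_dist_dist_le (l x) (l x') (r (φ x)) (r (φ x')), h x, h x']

variable [CompactSpace X] [Nonempty X] [CompactSpace Y] [Nonempty Y]

theorem hausdorffEDist_optimalGHInj_ne_top :
    hausdorffEDist (range (optimalGHInjl X Y)) (range (optimalGHInjr X Y)) ≠ ⊤ :=
  hausdorffEDist_ne_top_of_nonempty_of_bounded (range_nonempty _) (range_nonempty _)
    (isCompact_range (isometry_optimalGHInjl X Y).continuous).isBounded
    (isCompact_range (isometry_optimalGHInjr X Y).continuous).isBounded

theorem exists_dist_optimalGHInj_le_left (x : X) :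
    ∃ y : Y, dist (optimalGHInjl X Y x) (optimalGHInjr X Y y) ≤ ghDist X Y := by
  obtain ⟨_, ⟨y, rfl⟩, hy⟩ := (isCompact_range (isometry_optimalGHInjr X Y).continuous)
    |>.exists_infDist_eq_dist (range_nonempty _) (optimalGHInjl X Y x)
  refine ⟨y, ?_⟩
  rw [← hy, ← hausdorffDist_optimal]
  exact infDist_le_hausdorffDist_of_mem (mem_range_self x) hausdorffEDist_optimalGHInj_ne_top

theorem exists_dist_optimalGHInj_le_right (y : Y) :
    ∃ x : X, dist (optimalGHInjl X Y x) (optimalGHInjr X Y y) ≤ ghDist X Y := by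
  obtain ⟨_, ⟨x, rfl⟩, hx⟩ := (isCompact_range (isometry_optimalGHInjl X Y).continuous)
    |>.exists_infDist_eq_dist (range_nonempty _) (optimalGHInjr X Y y)
  refine ⟨x, ?_⟩
  rw [dist_comm, ← hx, ← hausdorffDist_optimal, hausdorffDist_comm]
  exact infDist_le_hausdorffDist_of_mem (mem_range_self y)
    (hausdorffEDist_comm.trans_ne hausdorffEDist_optimalGHInj_ne_top)

theorem exists_isLabeling [MetricSpace M] [CompactSpace M] [Nonempty M] {c ε : ℝ}
    (hC : IsGap M c) (hεc : 2 * ε ≤ c) (hX : ghDist X M < ε) :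
    ∃ f : X → M, IsLabeling f (2 * ε) := by
  choose f hf using exists_dist_optimalGHInj_le_left (X := X) (Y := M)
  refine ⟨f, fun m => ?_, ((DistortionLE.of_near (isometry_optimalGHInjl X M)
    (isometry_optimalGHInjr X M) hf).mono (by linarith))⟩
  obtain ⟨x, hx⟩ := exists_dist_optimalGHInj_le_right (X := X) m
  refine ⟨x, by_contra fun hne => ?_⟩
  have := hC.le_dist _ _ hne
  rw [← (isometry_optimalGHInjr X M).dist_eq] at this
  linarith [dist_triangle_left (optimalGHInjr X M (f x)) (optimalGHInjr X M m)
    (optimalGHInjl X M x), hf x]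

end Coupling

/-- Glues `X` and `Y` along `l` and `r`; the second coordinate keeps the two copies `η` apart,
so that the embedding is injective. -/
def glueEmb {X Y Z : Type*} (l : X → Z) (r : Y → Z) (η : ℝ) : X ⊕ Y → Z × ℝ :=
  Sum.elim (fun x => (l x, 0)) (fun y => (r y, η))

theorem glueEmb_injective {X Y Z : Type*} {l : X → Z} {r : Y → Z} (hl : Injective l)
    (hr : Injective r) {η : ℝ} (hη : η ≠ 0) : Injective (glueEmb l r η) := by
  rintro (x | y) (x' | y') h <;> simp_all [glueEmb, hl.eq_iff, hr.eq_iff, eq_comm]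

section GHDist

variable [MetricSpace M] {c ε : ℝ} {X Y : Type*} [MetricSpace X] [CompactSpace X] [Nonempty X]
  [MetricSpace Y] [CompactSpace Y] [Nonempty Y] {f : X → M} {g : Y → M}

theorem ghDist_twist_le_of_isometry {W : Type*} [MetricSpace W] {F : W → M} (hC : IsGap M c)
    (hF : DistortionLE F (c / 3)) {i : X → W} {j : Y → W} (hi : Isometry i) (hj : Isometry j)
    {ρ : ℝ} (hρ : ρ < c - c / 3) (hij : ∀ x, ∃ y, dist (i x) (j y) ≤ ρ)
    (hji : ∀ y, ∃ x, dist (i x) (j y) ≤ ρ) (τ : Equiv.Perm M) :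
    ghDist (Twist X τ (F ∘ i)) (Twist Y τ (F ∘ j)) ≤ ρ := by
  have hF' : IsTwistable F := ⟨c, hC, hF⟩
  obtain ⟨x₀⟩ := ‹Nonempty X›
  obtain ⟨y₀, hy₀⟩ := hij x₀
  refine (ghDist_le_hausdorffDist (isometry_toTwist_comp hi hF' τ)
    (isometry_toTwist_comp hj hF' τ)).trans <|
    hausdorffDist_le_of_mem_dist (dist_nonneg.trans hy₀) ?_ ?_
  · rintro _ ⟨x, rfl⟩
    obtain ⟨x, rfl⟩ := (toTwist τ (F ∘ i)).surjective x
    obtain ⟨y, hy⟩ := hij x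
    refine ⟨_, mem_range_self (toTwist τ (F ∘ j) y), ?_⟩
    simpa [dist_toTwist_of_eq hF' (hF.eq_of_dist_lt hC (hy.trans_lt hρ))] using hy
  · rintro _ ⟨y, rfl⟩
    obtain ⟨y, rfl⟩ := (toTwist τ (F ∘ j)).surjective y
    obtain ⟨x, hx⟩ := hji y
    refine ⟨_, mem_range_self (toTwist τ (F ∘ i) x), ?_⟩
    rw [dist_comm]
    simpa [dist_toTwist_of_eq hF' (hF.eq_of_dist_lt hC (hx.trans_lt hρ))] using hx

theorem ghDist_twist_le_of_coupling {Z : Type*} [MetricSpace Z] {k ρ η : ℝ} (hC : IsGap M c)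
    {l : X → Z} {r : Y → Z} (hl : Isometry l) (hr : Isometry r) (hf : DistortionLE f k)
    (hg : DistortionLE g k) (hfg : ∀ x y, |dist (l x) (r y) - dist (f x) (g y)| ≤ k)
    (hη : 0 < η) (hkη : k + η ≤ c / 3) (hρη : max ρ η < c - c / 3)
    (hlr : ∀ x, ∃ y, dist (l x) (r y) ≤ ρ) (hrl : ∀ y, ∃ x, dist (l x) (r y) ≤ ρ)
    (τ : Equiv.Perm M) : ghDist (Twist X τ f) (Twist Y τ g) ≤ max ρ η := by
  let _ : MetricSpace (X ⊕ Y) :=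
    .induced (glueEmb l r η) (glueEmb_injective hl.injective hr.injective hη.ne') inferInstance
  have hinl : Isometry (Sum.inl : X → X ⊕ Y) := Isometry.of_dist_eq fun x x' => by
    change dist (glueEmb l r η _) (glueEmb l r η _) = _
    simp [glueEmb, Prod.dist_eq, hl.dist_eq]
  have hinr : Isometry (Sum.inr : Y → X ⊕ Y) := Isometry.of_dist_eq fun y y' => by
    change dist (glueEmb l r η _) (glueEmb l r η _) = _
    simp [glueEmb, Prod.dist_eq, hr.dist_eq]
  have hcross : ∀ x y, dist (Sum.inl x : X ⊕ Y) (Sum.inr y) = max (dist (l x) (r y)) η :=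
    fun x y => by
      change dist (glueEmb l r η _) (glueEmb l r η _) = _
      simp [glueEmb, Prod.dist_eq, abs_of_pos hη]
  have hmax : ∀ x y, |max (dist (l x) (r y)) η - dist (f x) (g y)| ≤ c / 3 := fun x y => by
    have := abs_le.1 (hfg x y)
    rw [abs_le]
    constructor
    · linarith [le_max_left (dist (l x) (r y)) η]
    · rcases max_choice (dist (l x) (r y)) η with h | h <;> rw [h] <;>
        linarith [dist_nonneg (x := f x) (y := g y)]
  have hF : DistortionLE (Sum.elim f g) (c / 3) := by
    rintro (x | y) (x' | y')
    · simpa [hinl.dist_eq] using (hf x x').trans (by linarith)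
    · simpa [hcross] using hmax x y'
    · simpa [dist_comm, hcross] using hmax x' y
    · simpa [hinr.dist_eq] using (hg y y').trans (by linarith)
  simpa using ghDist_twist_le_of_isometry hC hF hinl hinr hρη
    (fun x => (hlr x).imp fun y hy => by rw [hcross]; exact max_le_max hy le_rfl)
    (fun y => (hrl y).imp fun x hx => by rw [hcross]; exact max_le_max hx le_rfl) τ

structure IsSmallRadius (M : Type*) [MetricSpace M] (c ε : ℝ) : Prop where
  isGap : IsGap M c
  three_le : 3 ≤ Cardinal.mk M
  pos : 0 < ε
  small : 15 * ε ≤ c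

theorem IsSmallRadius.isTwistable {X : Type*} [Dist X] {f : X → M} (hε : IsSmallRadius M c ε)
    (hf : IsLabeling f (2 * ε)) : IsTwistable f :=
  ⟨c, hε.isGap, hf.distortionLE.mono (by linarith [hε.small, hε.pos])⟩

theorem ghDist_twist_le (hε : IsSmallRadius M c ε) (hf : IsLabeling f (2 * ε))
    (hg : IsLabeling g (2 * ε)) (hXY : ghDist X Y ≤ 2 * ε) (τ : Equiv.Perm M) :
    ghDist (Twist X τ f) (Twist Y τ g) ≤ ghDist X Y := by
  obtain ⟨hC, h3, hεpos, hεc⟩ := hε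
  set ρ := ghDist X Y
  have hρ : 0 ≤ ρ := dist_nonneg
  set l := optimalGHInjl X Y
  have hl : Isometry l := isometry_optimalGHInjl X Y
  set r := optimalGHInjr X Y
  have hr : Isometry r := isometry_optimalGHInjr X Y
  choose nY hnY using exists_dist_optimalGHInj_le_left (X := X) (Y := Y)
  choose nX hnX using exists_dist_optimalGHInj_le_right (X := X) (Y := Y)
  have hgf : g = f ∘ nX := hg.distortionLE.eq_of_surjective hC h3
    (hf.distortionLE.comp (.of_near hr hl fun y => (dist_comm _ _).trans_le (hnX y)))
    (by linarith) hg.surjective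
  have hfg : ∀ x y, |dist (l x) (r y) - dist (f x) (g y)| ≤ ρ + 2 * ε := fun x y => by
    have h₁ := dist_dist_dist_le_right (l x) (r y) (l (nX y))
    rw [Real.dist_eq, hl.dist_eq, dist_comm (r y)] at h₁
    have h₂ := hf.distortionLE x (nX y)
    rw [hgf, comp_apply]
    linarith [abs_sub_le (dist (l x) (r y)) (dist x (nX y)) (dist (f x) (f (nX y))), hnX y]
  refine le_of_forall_pos_le_add fun η hη => ?_
  have hη' : 0 < min η ε := lt_min hη hεpos
  have hη'η := min_le_left η ε
  have hη'ε := min_le_right η ε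
  refine (ghDist_twist_le_of_coupling hC hl hr (hf.distortionLE.mono (by linarith))
    (hg.distortionLE.mono (by linarith)) hfg hη' (by linarith) (max_lt (by linarith)
    (by linarith)) (fun x => ⟨nY x, hnY x⟩) (fun y => ⟨nX y, hnX y⟩) τ).trans ?_
  exact max_le (by linarith) (by linarith)

theorem ghDist_twist_eq (hε : IsSmallRadius M c ε) (hf : IsLabeling f (2 * ε))
    (hg : IsLabeling g (2 * ε)) (hXY : ghDist X Y ≤ 2 * ε) (τ : Equiv.Perm M) :
    ghDist (Twist X τ f) (Twist Y τ g) = ghDist X Y := by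
  have hle := ghDist_twist_le hε hf hg hXY τ
  refine hle.antisymm ?_
  have hf' := hε.isTwistable hf
  have hg' := hε.isTwistable hg
  have := ghDist_twist_le hε (hf.twist hf' τ) (hg.twist hg' τ) (hle.trans hXY) τ⁻¹
  rwa [ghDist, ghDist, toGHSpace_twist_twist hf', toGHSpace_twist_twist hg', inv_mul_cancel,
    toGHSpace_twist_one hf', toGHSpace_twist_one hg'] at this

theorem ghDist_twist_self [CompactSpace M] [Nonempty M] (hε : IsSmallRadius M c ε)
    (hf : IsLabeling f (2 * ε)) (hX : ghDist X M ≤ 2 * ε) (τ : Equiv.Perm M) :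
    ghDist (Twist X τ f) M = ghDist X M := by
  have hid : IsLabeling (id : M → M) (2 * ε) :=
    ⟨surjective_id, fun x y => by simp only [id, sub_self, abs_zero]; linarith [hε.pos]⟩
  rw [← ghDist_twist_eq hε hf hid hX τ, ghDist, ghDist,
    toGHSpace_eq_toGHSpace_iff_isometryEquiv.2 ⟨twistSelfIso hε.isGap τ⟩]

end GHDist

section Ball

variable [MetricSpace M] [CompactSpace M] [Nonempty M] {c ε : ℝ}

theorem ghDist_rep_lt (p : ball (toGHSpace M) ε) : ghDist p.1.Rep M < ε := by
  rw [ghDist, p.1.toGHSpace_rep]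
  exact p.2

def repLabel (hε : IsSmallRadius M c ε) (p : ball (toGHSpace M) ε) : p.1.Rep → M :=
  (exists_isLabeling hε.isGap (by linarith [hε.small, hε.pos]) (ghDist_rep_lt p)).choose

theorem isLabeling_repLabel (hε : IsSmallRadius M c ε) (p : ball (toGHSpace M) ε) :
    IsLabeling (repLabel hε p) (2 * ε) :=
  (exists_isLabeling hε.isGap (by linarith [hε.small, hε.pos]) (ghDist_rep_lt p)).choose_spec

/-- The isometry `D_{M, M^τ, ε}` of the ball. -/
def ballTwist (hε : IsSmallRadius M c ε) (τ : Equiv.Perm M) (p : ball (toGHSpace M) ε) :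
    ball (toGHSpace M) ε :=
  ⟨toGHSpace (Twist p.1.Rep τ (repLabel hε p)), by
    rw [mem_ball, ← ghDist, ghDist_twist_self hε (isLabeling_repLabel hε p)
      ((ghDist_rep_lt p).le.trans (by linarith [hε.pos])) τ]
    exact ghDist_rep_lt p⟩

theorem ballTwist_val (hε : IsSmallRadius M c ε) (τ : Equiv.Perm M) {X : Type*} [MetricSpace X]
    [CompactSpace X] [Nonempty X] {f : X → M} (hf : IsLabeling f (2 * ε))
    {p : ball (toGHSpace M) ε} (hp : p.1 = toGHSpace X) :
    (ballTwist hε τ p).1 = toGHSpace (Twist X τ f) := by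
  obtain ⟨Φ⟩ := toGHSpace_eq_toGHSpace_iff_isometryEquiv.1 (p.1.toGHSpace_rep.trans hp)
  have hlabel : repLabel hε p = f ∘ Φ :=
    (isLabeling_repLabel hε p).distortionLE.eq_of_surjective hε.isGap hε.three_le
      (fun x y => by simpa only [comp_apply, Φ.dist_eq] using hf.distortionLE (Φ x) (Φ y))
      (by linarith [hε.small, hε.pos]) (isLabeling_repLabel hε p).surjective
  change toGHSpace (Twist p.1.Rep τ (repLabel hε p)) = _
  rw [hlabel]
  exact toGHSpace_eq_toGHSpace_iff_isometryEquiv.2 ⟨twistCongrIso Φ (hε.isTwistable hf) τ⟩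

theorem ballTwist_one (hε : IsSmallRadius M c ε) (p : ball (toGHSpace M) ε) :
    ballTwist hε 1 p = p :=
  Subtype.ext <| (toGHSpace_twist_one (hε.isTwistable (isLabeling_repLabel hε p))).trans
    p.1.toGHSpace_rep

theorem ballTwist_ballTwist (hε : IsSmallRadius M c ε) (σ τ : Equiv.Perm M)
    (p : ball (toGHSpace M) ε) : ballTwist hε σ (ballTwist hε τ p) = ballTwist hε (σ * τ) p := by
  have hp := isLabeling_repLabel hε p
  apply Subtype.ext
  rw [ballTwist_val hε σ (hp.twist (hε.isTwistable hp) τ) rfl]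
  exact toGHSpace_twist_twist (hε.isTwistable hp) σ τ

theorem dist_ballTwist (hε : IsSmallRadius M c ε) (τ : Equiv.Perm M)
    (p q : ball (toGHSpace M) ε) : dist (ballTwist hε τ p) (ballTwist hε τ q) = dist p q := by
  have hpq : ghDist p.1.Rep q.1.Rep ≤ 2 * ε := by
    rw [← dist_ghDist]
    linarith [dist_triangle_right p.1 q.1 (toGHSpace M), mem_ball.1 p.2, mem_ball.1 q.2]
  rw [Subtype.dist_eq, Subtype.dist_eq, dist_ghDist p.1]
  exact ghDist_twist_eq hε (isLabeling_repLabel hε p) (isLabeling_repLabel hε q) hpq τ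

def ballTwistHom (hε : IsSmallRadius M c ε) :
    Equiv.Perm M →* (ball (toGHSpace M) ε ≃ᵢ ball (toGHSpace M) ε) where
  toFun τ :=
    { toFun := ballTwist hε τ
      invFun := ballTwist hε τ⁻¹
      left_inv p := by rw [ballTwist_ballTwist, inv_mul_cancel, ballTwist_one]
      right_inv p := by rw [ballTwist_ballTwist, mul_inv_cancel, ballTwist_one]
      isometry_toFun := Isometry.of_dist_eq (dist_ballTwist hε τ) }
  map_one' := IsometryEquiv.ext (ballTwist_one hε)
  map_mul' σ τ := IsometryEquiv.ext fun p => (ballTwist_ballTwist hε σ τ p).symm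

theorem ballTwistHom_apply (hε : IsSmallRadius M c ε) (τ : Equiv.Perm M)
    (p : ball (toGHSpace M) ε) : ballTwistHom hε τ p = ballTwist hε τ p := rfl

end Ball

section Stretch

open scoped NNReal

def Stretch (M : Type*) (_t : ℝ≥0) : Type _ := M

variable [MetricSpace M] {c : ℝ} {t : ℝ≥0}

def toStretch (t : ℝ≥0) : M ≃ Stretch M t := Equiv.refl M

instance : MetricSpace (Stretch M t) where
  dist x y := (1 + t) * dist ((toStretch t).symm x) ((toStretch t).symm y)
  dist_self x := by simp
  dist_comm x y := by rw [dist_comm]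
  dist_triangle x y z := by
    rw [← mul_add]
    exact mul_le_mul_of_nonneg_left (dist_triangle _ _ _) (by positivity)
  eq_of_dist_eq_zero {x y} h :=
    (toStretch t).symm.injective (dist_eq_zero.1 ((mul_eq_zero.1 h).resolve_left (by positivity)))

theorem dist_toStretch (x y : M) :
    dist (toStretch t x) (toStretch t y) = (1 + t) * dist x y := rfl

instance [CompactSpace M] : CompactSpace (Stretch M t) :=
  (toStretch t).surjective.compactSpace
    (LipschitzWith.of_dist_le_mul (K := 1 + t) fun x y => (dist_toStretch x y).le).continuous

instance [Nonempty M] : Nonempty (Stretch M t) := ‹Nonempty M›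

theorem distortionLE_toStretch_symm {D : ℝ} (hD : ∀ a b : M, dist a b ≤ D) :
    DistortionLE (toStretch (M := M) t).symm (t * D) :=
  (toStretch t).surjective.forall₂.2 fun x y => by
    rw [dist_toStretch, Equiv.symm_apply_apply, Equiv.symm_apply_apply, add_mul, one_mul,
      add_sub_cancel_left, abs_of_nonneg (by positivity)]
    exact mul_le_mul_of_nonneg_left (hD x y) t.2

theorem ghDist_stretch_le [CompactSpace M] [Nonempty M] {D : ℝ} (hD : ∀ a b : M, dist a b ≤ D) :
    ghDist (Stretch M t) M ≤ t * D / 2 := by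
  simpa using ghDist_le_of_approx_subsets (s := univ) (fun x => (toStretch t).symm x.1)
    (ε₁ := 0) (ε₃ := 0) (fun x => ⟨x, mem_univ _, (dist_self x).le⟩)
    (fun m => ⟨⟨toStretch t m, mem_univ _⟩, by simp⟩)
    fun x y => by rw [Subtype.dist_eq]; exact distortionLE_toStretch_symm hD _ _

theorem IsGap.eq_one_of_twist_stretch (hC : IsGap M c) (h3 : 3 ≤ Cardinal.mk M) (ht : 0 < t)
    {D : ℝ} (hD : ∀ a b : M, dist a b ≤ D) (htD : t * D ≤ c / 3) {τ : Equiv.Perm M}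
    (G : Twist (Stretch M t) τ (toStretch t).symm ≃ᵢ Stretch M t) : τ = 1 := by
  have htw : IsTwistable (toStretch t).symm := ⟨c, hC, (distortionLE_toStretch_symm hD).mono htD⟩
  set φ : M → M := fun a => (toStretch t).symm (G (toTwist τ _ (toStretch t a)))
  have hφ : ∀ a b, (1 + t) * dist (φ a) (φ b) = t * dist a b + dist (τ a) (τ b) := fun a b => by
    have e : ∀ a, G (toTwist τ _ (toStretch t a)) = toStretch t (φ a) := fun a =>
      ((toStretch t).apply_symm_apply _).symm
    have := G.dist_eq (toTwist τ _ (toStretch t a)) (toTwist τ _ (toStretch t b))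
    rw [e, e, dist_toTwist htw, dist_toStretch, dist_toStretch] at this
    simp only [Equiv.symm_apply_apply] at this
    linear_combination this
  -- `τ` and `φ` agree on distances up to `t D < c`, hence exactly.
  have hτφ : ∀ a b, dist (τ a) (τ b) = dist (φ a) (φ b) := fun a b =>
    hC.dist_eq_of_abs_sub_lt <| by
      have : dist (τ a) (τ b) - dist (φ a) (φ b) = t * (dist (φ a) (φ b) - dist a b) := by
        linear_combination -hφ a b
      rw [this, abs_mul, NNReal.abs_eq]
      calc (t : ℝ) * |dist (φ a) (φ b) - dist a b| ≤ t * D :=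
            mul_le_mul_of_nonneg_left (abs_sub_le_iff.2
              ⟨by linarith [hD (φ a) (φ b), dist_nonneg (x := a) (y := b)],
                by linarith [hD a b, dist_nonneg (x := φ a) (y := φ b)]⟩) t.2
        _ < c := by linarith [hC.pos]
  ext1
  refine congrFun (hC.eq_id_of_dist_eq h3 fun a b => ?_) _
  have := hφ a b
  rw [← hτφ] at this
  exact mul_left_cancel₀ (by exact_mod_cast ht.ne' : (t : ℝ) ≠ 0) (by linarith)

end Stretch

open scoped NNReal in
theorem ballTwistHom_injective [MetricSpace M] [CompactSpace M] [Nonempty M] {c ε : ℝ}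
    (hε : IsSmallRadius M c ε) : Injective (ballTwistHom hε) := by
  refine (injective_iff_map_eq_one _).2 fun τ hτ => ?_
  set D := diam (univ : Set M)
  have hD : ∀ a b : M, dist a b ≤ D := fun a b =>
    dist_le_diam_of_mem isCompact_univ.isBounded (mem_univ a) (mem_univ b)
  have hD0 : 0 ≤ D := diam_nonneg
  have hεpos := hε.pos
  set t : ℝ≥0 := ⟨ε / (D + 1), by positivity⟩
  have ht : 0 < t := show (0 : ℝ) < ε / (D + 1) by positivity
  have htD : t * D ≤ ε := calc
    (t : ℝ) * D ≤ ε / (D + 1) * (D + 1) := mul_le_mul_of_nonneg_left (by linarith) t.2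
    _ = ε := div_mul_cancel₀ ε (by linarith)
  have hS : IsLabeling (toStretch (M := M) t).symm (2 * ε) :=
    ⟨(toStretch t).symm.surjective, (distortionLE_toStretch_symm hD).mono (by linarith)⟩
  have hmem : toGHSpace (Stretch M t) ∈ ball (toGHSpace M) ε := by
    rw [mem_ball, ← ghDist]
    linarith [ghDist_stretch_le (t := t) hD]
  have h := congrArg Subtype.val (DFunLike.congr_fun hτ ⟨_, hmem⟩)
  rw [ballTwistHom_apply, IsometryEquiv.coe_one, id, ballTwist_val hε τ hS rfl] at h
  obtain ⟨G⟩ := toGHSpace_eq_toGHSpace_iff_isometryEquiv.1 h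
  exact hε.isGap.eq_one_of_twist_stretch hε.three_le ht hD (by linarith [hε.small]) G

end GHBallSymmetry

end

/-- for a finite metric space `M` with `n ≥ 3` points in general
position and all sufficiently small `ε > 0`, the isometry group of the ball
`U_ε(M)` in the Gromov--Hausdorff space contains a subgroup isomorphic to `Sₙ`:
there is an injective group homomorphism from the permutation group of the points
of `M` into the group of isometries of `U_ε(M)`. -/
theorem stmt_14 (M : Type) [MetricSpace M] [Fintype M] [Nonempty M]
    (h3 : 3 ≤ Fintype.card M) (hGP : InGeneralPosition M) :
    ∃ ε₀ : ℝ, 0 < ε₀ ∧ ∀ ε : ℝ, 0 < ε → ε ≤ ε₀ →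
      ∃ φ : Equiv.Perm M →*
          ((Metric.ball (GromovHausdorff.toGHSpace M) ε) ≃ᵢ
            (Metric.ball (GromovHausdorff.toGHSpace M) ε)),
        Function.Injective φ := by
  obtain ⟨c, hC⟩ := hGP.exists_isGap
  have h3' : 3 ≤ Cardinal.mk M := by
    rw [Cardinal.mk_fintype]
    exact_mod_cast h3
  refine ⟨c / 15, div_pos hC.pos (by norm_num), fun ε hε hεc => ?_⟩
  have hr : GHBallSymmetry.IsSmallRadius M c ε := ⟨hC, h3', hε, by linarith⟩
  exact ⟨GHBallSymmetry.ballTwistHom hr, GHBallSymmetry.ballTwistHom_injective hr⟩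
end

section
/- Let M be a finite metric space with n points and X a compact metric space with 2·d_GH(M,X) < s(M)/2. Then X admits a partition into exactly n nonempty closed subsets, each of diameter less than s(M)/2, and in particular each element of this partition is a compact subset of X and X has at least n points. -/
/-- let `M` be a finite metric space and `X` a compact metric space
with `2·d_GH(M,X) < s(M)/2`, say `2·d_GH(M,X) < ε` where `ε = s(M)/2` (so
`2ε ≤ dist i j` for all `i ≠ j` in `M`).  Then `X` admits a partition, indexed by
the points of `M` (hence into exactly `n = #M` nonempty parts), into nonempty
closed (indeed compact) subsets of diameter `< ε = s(M)/2`, realizing the distances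
of `M` within `ε`; in particular `X` has at least `n` points. -/
theorem stmt_18 (M X : Type) [MetricSpace M] [Fintype M] [Nonempty M]
    [MetricSpace X] [CompactSpace X] [Nonempty X]
    (ε : ℝ) (hε : 0 < ε) (hεs : ∀ i j : M, i ≠ j → 2 * ε ≤ dist i j)
    (hX : 2 * GromovHausdorff.ghDist M X < ε) :
    (∃ P : M → Set X,
      (∀ i, (P i).Nonempty) ∧ (Pairwise fun i j : M => Disjoint (P i) (P j)) ∧
        (⋃ i, P i) = Set.univ ∧
        (∀ i, IsClosed (P i)) ∧ (∀ i, IsCompact (P i)) ∧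
        (∀ i, Metric.diam (P i) < ε) ∧
        (∀ i j : M, ∀ x ∈ P i, ∀ x' ∈ P j, |dist x x' - dist i j| < ε)) ∧
      ∃ f : M → X, Function.Injective f := by
  classical
  set Z := GromovHausdorff.OptimalGHCoupling M X
  set f : M → Z := GromovHausdorff.optimalGHInjl M X
  set g : X → Z := GromovHausdorff.optimalGHInjr M X
  have hfI : Isometry f := GromovHausdorff.isometry_optimalGHInjl M X
  have hgI : Isometry g := GromovHausdorff.isometry_optimalGHInjr M X
  have hHD : Metric.hausdorffDist (Set.range f) (Set.range g) < ε / 2 := by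
    rw [GromovHausdorff.hausdorffDist_optimal]; linarith
  have hfc : IsCompact (Set.range f) := Set.finite_range f |>.isCompact
  have hgc : IsCompact (Set.range g) :=
    isCompact_range hgI.continuous
  have hne : EMetric.hausdorffEdist (Set.range f) (Set.range g) ≠ ⊤ :=
    Metric.hausdorffEdist_ne_top_of_nonempty_of_bounded (Set.range_nonempty f)
      (Set.range_nonempty g) hfc.isBounded hgc.isBounded
  -- every point of X is within ε/2 of some f i
  have hclose : ∀ x : X, ∃ i : M, dist (g x) (f i) < ε / 2 := by
    intro x
    have h1 : Metric.infDist (g x) (Set.range f) < ε / 2 :=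
      lt_of_le_of_lt
        (Metric.infDist_le_hausdorffDist_of_mem (Set.mem_range_self x)
          (by rw [EMetric.hausdorffEdist_comm]; exact hne)) (by
          rwa [Metric.hausdorffDist_comm])
    obtain ⟨z, ⟨i, rfl⟩, hz⟩ := hfc.exists_infDist_eq_dist (Set.range_nonempty f) (g x)
    exact ⟨i, by rw [← hz]; exact h1⟩
  -- the partition: argmin sets
  set P : M → Set X := fun i => {x : X | ∀ j : M, dist (g x) (f i) ≤ dist (g x) (f j)}
  -- membership gives distance < ε/2
  have hPsmall : ∀ i : M, ∀ x ∈ P i, dist (g x) (f i) < ε / 2 := by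
    intro i x hx
    obtain ⟨j, hj⟩ := hclose x
    exact lt_of_le_of_lt (hx j) hj
  have hcover : ∀ x : X, ∃ i, x ∈ P i := by
    intro x
    obtain ⟨i, hi⟩ := Finite.exists_min (fun i : M => dist (g x) (f i))
    exact ⟨i, hi⟩
  have hdisj : Pairwise fun i j : M => Disjoint (P i) (P j) := by
    intro i j hij
    rw [Set.disjoint_left]
    intro x hxi hxj
    have h1 := hPsmall i x hxi
    have h2 := hPsmall j x hxj
    have h3 : dist (f i) (f j) ≤ dist (f i) (g x) + dist (g x) (f j) := dist_triangle _ _ _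
    have h4 : dist i j = dist (f i) (f j) := (hfI.dist_eq i j).symm
    have h5 := hεs i j hij
    rw [dist_comm (f i) (g x)] at h3
    linarith
  have hclosed : ∀ i, IsClosed (P i) := by
    intro i
    have : P i = ⋂ j : M, {x : X | dist (g x) (f i) ≤ dist (g x) (f j)} := by
      ext x; simp [P, Set.mem_iInter]
    rw [this]
    exact isClosed_iInter fun j =>
      isClosed_le (Continuous.dist hgI.continuous continuous_const)
        (Continuous.dist hgI.continuous continuous_const)
  have hcompact : ∀ i, IsCompact (P i) := fun i => (hclosed i).isCompact
  have hnonempty : ∀ i, (P i).Nonempty := by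
    intro i
    have h1 : Metric.infDist (f i) (Set.range g) < ε / 2 :=
      lt_of_le_of_lt (Metric.infDist_le_hausdorffDist_of_mem (Set.mem_range_self i) hne) hHD
    obtain ⟨z, ⟨x, rfl⟩, hz⟩ := hgc.exists_infDist_eq_dist (Set.range_nonempty g) (f i)
    have hxi : dist (g x) (f i) < ε / 2 := by rw [dist_comm, ← hz]; exact h1
    refine ⟨x, fun j => ?_⟩
    by_cases hij : i = j
    · subst hij; rfl
    · have h5 := hεs i j hij
      have h4 : dist i j = dist (f i) (f j) := (hfI.dist_eq i j).symm
      have h3 : dist (f i) (f j) ≤ dist (f i) (g x) + dist (g x) (f j) := dist_triangle _ _ _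
      rw [dist_comm (f i) (g x)] at h3
      linarith
  have hdistest : ∀ i j : M, ∀ x ∈ P i, ∀ x' ∈ P j, |dist x x' - dist i j| < ε := by
    intro i j x hx x' hx'
    have h1 := hPsmall i x hx
    have h2 := hPsmall j x' hx'
    have hxx : dist x x' = dist (g x) (g x') := (hgI.dist_eq x x').symm
    have hij : dist i j = dist (f i) (f j) := (hfI.dist_eq i j).symm
    rw [hxx, hij, abs_sub_lt_iff]
    constructor
    · have := dist_triangle4 (g x) (f i) (f j) (g x')
      have h2' : dist (f j) (g x') < ε / 2 := by rwa [dist_comm]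
      linarith
    · have := dist_triangle4 (f i) (g x) (g x') (f j)
      have h1' : dist (f i) (g x) < ε / 2 := by rwa [dist_comm]
      linarith
  have hdiam : ∀ i, Metric.diam (P i) < ε := by
    intro i
    rcases (P i).eq_empty_or_nonempty with h | h
    · rw [h]; simpa using hε
    · obtain ⟨⟨x, x'⟩, ⟨hx, hx'⟩, hmax⟩ :=
        ((hcompact i).prod (hcompact i)).exists_isMaxOn (h.prod h)
          ((continuous_dist.comp (continuous_fst.prodMk continuous_snd)).continuousOn :
            ContinuousOn (fun p : X × X => dist p.1 p.2) _)
      have hdle : Metric.diam (P i) ≤ dist x x' := by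
        apply Metric.diam_le_of_forall_dist_le (dist_nonneg.trans (le_refl _) |>.trans le_rfl)
        intro a ha b hb
        exact hmax (Set.mk_mem_prod ha hb)
      have h1 := hPsmall i x hx
      have h2 := hPsmall i x' hx'
      have h3 : dist x x' = dist (g x) (g x') := (hgI.dist_eq x x').symm
      have h4 : dist (g x) (g x') ≤ dist (g x) (f i) + dist (f i) (g x') := dist_triangle _ _ _
      rw [dist_comm (f i) (g x')] at h4
      linarith
  refine ⟨⟨P, hnonempty, hdisj, ?_, hclosed, hcompact, hdiam, hdistest⟩, ?_⟩
  · ext x; simp only [Set.mem_iUnion, Set.mem_univ, iff_true]; exact hcover x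
  · choose fp hfp using hnonempty
    refine ⟨fp, fun i j hij => by_contra fun hne' => ?_⟩
    exact (Set.disjoint_left.1 (hdisj hne')) (hfp i) (hij ▸ hfp j)
end
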